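/- arXiv:1511.05861 — 8 statements merged into one kernel-verified Lean document; each statement's English description precedes it below -/
import Mathlib

section
/- Let P be a finite poset and let A₁, A₂ be two antichains of P, both of maximal size m. Then the set of minimal elements of A₁ ∪ A₂ is also an antichain of size m (hence a maximal-size antichain), and likewise for the set of maximal elements of A₁ ∪ A₂. -/
theorem stmt1 {α : Type*} [Fintype α] [PartialOrder α] [DecidableEq α]
    [DecidableRel ((· < ·) : α → α → Prop)]
    (m : ℕ) (A₁ A₂ : Finset α)
    (h1 : IsAntichain (· ≤ ·) (A₁ : Set α))
    (h2 : IsAntichain (· ≤ ·) (A₂ : Set α))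
    (hc1 : A₁.card = m) (hc2 : A₂.card = m)
    (hmax : ∀ S : Finset α, IsAntichain (· ≤ ·) (S : Set α) → S.card ≤ m) :
    (IsAntichain (· ≤ ·)
        (((A₁ ∪ A₂).filter (fun x => ∀ y ∈ A₁ ∪ A₂, ¬ y < x) : Finset α) : Set α) ∧
      ((A₁ ∪ A₂).filter (fun x => ∀ y ∈ A₁ ∪ A₂, ¬ y < x)).card = m) ∧
    (IsAntichain (· ≤ ·)
        (((A₁ ∪ A₂).filter (fun x => ∀ y ∈ A₁ ∪ A₂, ¬ x < y) : Finset α) : Set α) ∧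
      ((A₁ ∪ A₂).filter (fun x => ∀ y ∈ A₁ ∪ A₂, ¬ x < y)).card = m) := by
  classical
  set U := A₁ ∪ A₂ with hU
  set M := U.filter (fun x => ∀ y ∈ U, ¬ y < x) with hM
  set N := U.filter (fun x => ∀ y ∈ U, ¬ x < y) with hN
  -- M is an antichain
  have hMac : IsAntichain (· ≤ ·) (M : Set α) := by
    intro x hx y hy hxy hle
    simp only [hM, Finset.coe_filter, Set.mem_setOf_eq, Finset.mem_filter] at hx hy
    exact hy.2 x hx.1 (lt_of_le_of_ne hle hxy)
  -- N is an antichain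
  have hNac : IsAntichain (· ≤ ·) (N : Set α) := by
    intro x hx y hy hxy hle
    simp only [hN, Finset.coe_filter, Set.mem_setOf_eq, Finset.mem_filter] at hx hy
    exact hx.2 y hy.1 (lt_of_le_of_ne hle hxy)
  -- M ∪ N = U
  have hunion : M ∪ N = U := by
    apply Finset.Subset.antisymm
    · intro x hx
      rcases Finset.mem_union.1 hx with h | h <;>
        exact (Finset.mem_filter.1 h).1
    · intro x hx
      by_contra hcon
      simp only [Finset.mem_union, hM, hN, Finset.mem_filter, not_or, not_and, not_forall,
        not_not] at hcon
      obtain ⟨y, hy, hyx⟩ := by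
        simpa using hcon.1 hx
      obtain ⟨z, hz, hxz⟩ := by
        simpa using hcon.2 hx
      -- x ∈ A₁ or A₂; y < x < z, y,z must be in the other antichain, contradiction
      have hyz : y < z := hyx.trans hxz
      rcases Finset.mem_union.1 hx with hx1 | hx1
      · have hy2 : y ∈ A₂ := by
          rcases Finset.mem_union.1 hy with h | h
          · exact absurd (le_of_lt hyx) (h1 h hx1 (ne_of_lt hyx))
          · exact h
        have hz2 : z ∈ A₂ := by
          rcases Finset.mem_union.1 hz with h | h
          · exact absurd (le_of_lt hxz) (h1 hx1 h (ne_of_lt hxz))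
          · exact h
        exact h2 hy2 hz2 (ne_of_lt hyz) (le_of_lt hyz)
      · have hy1 : y ∈ A₁ := by
          rcases Finset.mem_union.1 hy with h | h
          · exact h
          · exact absurd (le_of_lt hyx) (h2 h hx1 (ne_of_lt hyx))
        have hz1 : z ∈ A₁ := by
          rcases Finset.mem_union.1 hz with h | h
          · exact h
          · exact absurd (le_of_lt hxz) (h2 hx1 h (ne_of_lt hxz))
        exact h1 hy1 hz1 (ne_of_lt hyz) (le_of_lt hyz)
  -- A₁ ∩ A₂ ⊆ M ∩ N
  have hinter : A₁ ∩ A₂ ⊆ M ∩ N := by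
    intro x hx
    obtain ⟨hx1, hx2⟩ := Finset.mem_inter.1 hx
    have hxU : x ∈ U := Finset.mem_union_left _ hx1
    refine Finset.mem_inter.2 ⟨Finset.mem_filter.2 ⟨hxU, ?_⟩, Finset.mem_filter.2 ⟨hxU, ?_⟩⟩
    · intro y hy hyx
      rcases Finset.mem_union.1 hy with h | h
      · exact h1 h hx1 (ne_of_lt hyx) (le_of_lt hyx)
      · exact h2 h hx2 (ne_of_lt hyx) (le_of_lt hyx)
    · intro y hy hxy
      rcases Finset.mem_union.1 hy with h | h
      · exact h1 hx1 h (ne_of_lt hxy) (le_of_lt hxy)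
      · exact h2 hx2 h (ne_of_lt hxy) (le_of_lt hxy)
  -- counting
  have hMle : M.card ≤ m := hmax M hMac
  have hNle : N.card ≤ m := hmax N hNac
  have key : M.card + N.card ≥ m + m := by
    have e1 : (M ∪ N).card + (M ∩ N).card = M.card + N.card :=
      Finset.card_union_add_card_inter M N
    have e2 : U.card + (A₁ ∩ A₂).card = m + m := by
      have := Finset.card_union_add_card_inter A₁ A₂
      rw [hc1, hc2] at this
      exact this
    calc m + m = U.card + (A₁ ∩ A₂).card := e2.symm
      _ ≤ (M ∪ N).card + (M ∩ N).card := by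
          rw [hunion]
          exact Nat.add_le_add le_rfl (Finset.card_le_card hinter)
      _ = M.card + N.card := e1
  have hMc : M.card = m := by omega
  have hNc : N.card = m := by omega
  exact ⟨⟨hMac, hMc⟩, ⟨hNac, hNc⟩⟩
end

section
/- For subsets A, B ⊆ ℤ/nℤ with |A| = |B| = k, there is a unique stream S = st₀(A,B) such that exactly k elements (i,j) of S satisfy 1 ≤ i ≤ n and 1 ≤ j ≤ n. Explicitly, if a₁ < ⋯ < a_k and b₁ < ⋯ < b_k are the representatives in {1,…,n} of the classes in A and B respectively, then S = {(a_r + tn, b_r + tn) : 1 ≤ r ≤ k, t ∈ ℤ}. -/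
/-!
Let `a₁ < ⋯ < a_k` and `b₁ < ⋯ < b_k` be the representatives in `{1, …, n}` of `A` and `B`.
In a strict southeast chain the order by rows agrees with the order by columns, so a chain of
`k` points of the box `{1, …, n}²` with rows among the `a_r` and columns among the `b_r` must be
`{(a_r, b_r)}` (`rankMatching`). An `(A,B)`-stream with `k` points in the box meets it in such a
set. Moreover each of its points has a translate by a multiple of `(n, n)` in the box: the
translate whose row lies in `{1, …, n}` shares that row with a box point, and a chain has one
point per row. Hence the stream is the set of translates of `{(a_r, b_r)}`, which is `st₀(A,B)`.
Conversely, translates of a box point by different multiples of `(n, n)` are strictly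
comparable, so `st₀(A,B)` is a stream.
-/

/-- A stream: an `(n,n)`-translation-invariant chain in the southeast order. -/
def IsStream (n : ℕ) (S : Set (ℤ × ℤ)) : Prop :=
  (∀ p : ℤ × ℤ, p ∈ S ↔ ((p.1 + n, p.2 + n) : ℤ × ℤ) ∈ S) ∧
  ∀ p ∈ S, ∀ q ∈ S, p ≠ q →
    (p.1 < q.1 ∧ p.2 < q.2) ∨ (q.1 < p.1 ∧ q.2 < p.2)

/-- An `(A,B)`-stream: the residues of rows give `A` and of columns give `B`. -/
def IsABStream (n : ℕ) (A B : Finset (ZMod n)) (S : Set (ℤ × ℤ)) : Prop :=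
  IsStream n S ∧
  (∀ a : ZMod n, a ∈ A ↔ ∃ p ∈ S, ((p.1 : ZMod n) = a)) ∧
  (∀ b : ZMod n, b ∈ B ↔ ∃ p ∈ S, ((p.2 : ZMod n) = b))

/-- The explicit stream `st₀(A,B)`, pairing the representatives in `{1,…,n}` of `A`
and `B` in increasing order (matched by rank). -/
def stZero (n : ℕ) (A B : Finset (ZMod n)) : Set (ℤ × ℤ) :=
  {p : ℤ × ℤ | ∃ a b t : ℤ, a ∈ Finset.Icc (1 : ℤ) n ∧ b ∈ Finset.Icc (1 : ℤ) n ∧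
    (a : ZMod n) ∈ A ∧ (b : ZMod n) ∈ B ∧
    ((Finset.Icc (1 : ℤ) n).filter (fun x : ℤ => ((x : ZMod n) ∈ A ∧ x ≤ a))).card =
      ((Finset.Icc (1 : ℤ) n).filter (fun x : ℤ => ((x : ZMod n) ∈ B ∧ x ≤ b))).card ∧
    p = (a + t * n, b + t * n)}

open Finset

def Prod.StrongLT {α β : Type*} [LT α] [LT β] (p q : α × β) : Prop := p.1 < q.1 ∧ p.2 < q.2

namespace IsChain

variable {α β : Type*} [LinearOrder α] [LinearOrder β] {s : Set (α × β)}

theorem fst_le_iff_snd_le (hs : IsChain Prod.StrongLT s) {p q : α × β} (hp : p ∈ s)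
    (hq : q ∈ s) : p.1 ≤ q.1 ↔ p.2 ≤ q.2 := by
  rcases eq_or_ne p q with rfl | hne
  · simp
  rcases hs hp hq hne with ⟨h1, h2⟩ | ⟨h1, h2⟩
  · exact iff_of_true h1.le h2.le
  · exact iff_of_false h1.not_ge h2.not_ge

theorem fst_injOn (hs : IsChain Prod.StrongLT s) : Set.InjOn Prod.fst s := fun _ hp _ hq h =>
  Prod.ext h (le_antisymm ((hs.fst_le_iff_snd_le hp hq).1 h.le)
    ((hs.fst_le_iff_snd_le hq hp).1 h.ge))

theorem snd_injOn (hs : IsChain Prod.StrongLT s) : Set.InjOn Prod.snd s := fun _ hp _ hq h =>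
  Prod.ext (le_antisymm ((hs.fst_le_iff_snd_le hp hq).2 h.le)
    ((hs.fst_le_iff_snd_le hq hp).2 h.ge)) h

end IsChain

namespace Finset

variable {α β : Type*} [LinearOrder α] [LinearOrder β]

def rank (F : Finset α) (a : α) : ℕ := #{x ∈ F | x ≤ a}

theorem rank_strictMonoOn (F : Finset α) : StrictMonoOn F.rank F := by
  intro a _ a' ha' h
  refine card_lt_card ((ssubset_iff_of_subset ?_).2 ⟨a', ?_, ?_⟩)
  · exact monotone_filter_right _ fun _ _ hx => hx.trans h.le
  · exact mem_filter.2 ⟨ha', le_rfl⟩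
  · exact fun ha'' => h.not_ge (mem_filter.1 ha'').2

theorem rank_mem_Icc {F : Finset α} {a : α} (ha : a ∈ F) : F.rank a ∈ Icc 1 #F :=
  mem_Icc.2 ⟨card_pos.2 ⟨a, mem_filter.2 ⟨ha, le_rfl⟩⟩, card_filter_le _ _⟩

theorem image_rank (F : Finset α) : F.image F.rank = Icc 1 #F := by
  refine eq_of_subset_of_card_le (image_subset_iff.2 fun _ => rank_mem_Icc) ?_
  rw [card_image_of_injOn (rank_strictMonoOn F).injOn, Nat.card_Icc, Nat.add_sub_cancel]

theorem rank_image {γ : Type*} {Q : Finset γ} {f : γ → α} (hf : Set.InjOn f Q) (a : α) :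
    (Q.image f).rank a = #{q ∈ Q | f q ≤ a} := by
  rw [rank, filter_image, card_image_of_injOn (hf.mono (filter_subset _ _))]

def rankMatching (F : Finset α) (G : Finset β) : Finset (α × β) :=
  {q ∈ F ×ˢ G | F.rank q.1 = G.rank q.2}

variable {F : Finset α} {G : Finset β}

theorem exists_rank_eq (h : #F = #G) {a : α} (ha : a ∈ F) : ∃ b ∈ G, G.rank b = F.rank a := by
  have := rank_mem_Icc ha
  rwa [h, ← image_rank, mem_image] at this

theorem image_fst_rankMatching (h : #F = #G) : (rankMatching F G).image Prod.fst = F := by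
  ext a
  simp only [rankMatching, mem_image, mem_filter, mem_product, Prod.exists]
  refine ⟨fun ⟨_, _, ⟨⟨ha, _⟩, _⟩, rfl⟩ => ha, fun ha => ?_⟩
  obtain ⟨b, hb, hab⟩ := exists_rank_eq h ha
  exact ⟨a, b, ⟨⟨ha, hb⟩, hab.symm⟩, rfl⟩

theorem image_snd_rankMatching (h : #F = #G) : (rankMatching F G).image Prod.snd = G := by
  ext b
  simp only [rankMatching, mem_image, mem_filter, mem_product, Prod.exists]
  refine ⟨fun ⟨_, _, ⟨⟨_, hb⟩, _⟩, rfl⟩ => hb, fun hb => ?_⟩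
  obtain ⟨a, ha, hab⟩ := exists_rank_eq h.symm hb
  exact ⟨a, b, ⟨⟨ha, hb⟩, hab⟩, rfl⟩

theorem card_rankMatching (h : #F = #G) : #(rankMatching F G) = #F := by
  conv_rhs => rw [← image_fst_rankMatching h]
  refine (card_image_of_injOn fun p hp q hq hpq => Prod.ext hpq ?_).symm
  simp only [rankMatching, coe_filter, mem_product, Set.mem_ofPred_eq] at hp hq
  exact (rank_strictMonoOn G).injOn hp.1.2 hq.1.2 (hp.2 ▸ hq.2 ▸ congrArg F.rank hpq)

theorem rankMatching_fst_lt_iff_snd_lt {p q : α × β} (hp : p ∈ rankMatching F G)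
    (hq : q ∈ rankMatching F G) : p.1 < q.1 ↔ p.2 < q.2 := by
  obtain ⟨hpFG, hp⟩ := mem_filter.1 hp
  obtain ⟨hqFG, hq⟩ := mem_filter.1 hq
  rw [← (rank_strictMonoOn F).lt_iff_lt (mem_product.1 hpFG).1 (mem_product.1 hqFG).1, hp, hq,
    (rank_strictMonoOn G).lt_iff_lt (mem_product.1 hpFG).2 (mem_product.1 hqFG).2]

theorem isChain_rankMatching : IsChain Prod.StrongLT (rankMatching F G : Set (α × β)) := by
  intro p hp q hq hne
  rcases lt_trichotomy p.1 q.1 with h | h | h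
  · exact Or.inl ⟨h, (rankMatching_fst_lt_iff_snd_lt hp hq).1 h⟩
  · rcases lt_trichotomy p.2 q.2 with h' | h' | h'
    · exact absurd ((rankMatching_fst_lt_iff_snd_lt hp hq).2 h') h.not_lt
    · exact absurd (Prod.ext h h') hne
    · exact absurd ((rankMatching_fst_lt_iff_snd_lt hq hp).2 h') h.not_gt
  · exact Or.inr ⟨h, (rankMatching_fst_lt_iff_snd_lt hq hp).1 h⟩

theorem eq_rankMatching_of_isChain {Q : Finset (α × β)} (hQ : Q ⊆ F ×ˢ G)
    (hchain : IsChain Prod.StrongLT (Q : Set (α × β))) (hF : #Q = #F) (hG : #Q = #G) :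
    Q = rankMatching F G := by
  have himage_fst : Q.image Prod.fst = F :=
    eq_of_subset_of_card_le (image_subset_iff.2 fun q hq => (mem_product.1 (hQ hq)).1)
      (by rw [card_image_of_injOn hchain.fst_injOn, hF])
  have himage_snd : Q.image Prod.snd = G :=
    eq_of_subset_of_card_le (image_subset_iff.2 fun q hq => (mem_product.1 (hQ hq)).2)
      (by rw [card_image_of_injOn hchain.snd_injOn, hG])
  have hrank : ∀ q ∈ Q, F.rank q.1 = G.rank q.2 := fun q hq => by
    rw [← himage_fst, ← himage_snd, rank_image hchain.fst_injOn, rank_image hchain.snd_injOn]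
    exact congrArg card (filter_congr fun r hr => hchain.fst_le_iff_snd_le hr hq)
  refine eq_of_subset_of_card_le (fun q hq => mem_filter.2 ⟨hQ hq, hrank q hq⟩) ?_
  rw [card_rankMatching (hF.symm.trans hG), hF]

end Finset

section Residues

variable {n : ℕ}

theorem add_mul_lt_add_mul {a b t s : ℤ} (ha : a ∈ Set.Icc 1 (n : ℤ))
    (hb : b ∈ Set.Icc 1 (n : ℤ)) (h : t < s) : a + t * n < b + s * n := by
  have : t * n + n ≤ s * n := by nlinarith [(Int.natCast_nonneg n)]
  linarith [ha.2, hb.1]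

theorem eq_zero_of_add_mul_mem_Icc {a t : ℤ} (ha : a ∈ Set.Icc 1 (n : ℤ))
    (h : a + t * n ∈ Set.Icc 1 (n : ℤ)) : t = 0 := by
  rcases lt_trichotomy t 0 with ht | ht | ht
  · simpa using add_mul_lt_add_mul ha h ht
  · exact ht
  · simpa using add_mul_lt_add_mul h ha ht

theorem exists_add_mul_mem_Icc [NeZero n] (x : ℤ) : ∃ t : ℤ, x + t * n ∈ Set.Icc 1 (n : ℤ) := by
  have h := Set.Icc_add_one_left_eq_Ioc (0 : ℤ) n
  rw [zero_add] at h
  simpa [h] using (existsUnique_add_zsmul_mem_Ioc (Int.natCast_pos.2 (NeZero.pos n)) x 0).exists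

theorem intCast_injOn_Icc : Set.InjOn (fun x : ℤ => (x : ZMod n)) (Set.Icc 1 n) := by
  intro x hx y hy h
  obtain ⟨c, hc⟩ := (ZMod.intCast_eq_intCast_iff_dvd_sub x y n).1 h
  have hy' : y = x + c * n := by linarith
  obtain rfl : c = 0 := eq_zero_of_add_mul_mem_Icc hx (hy' ▸ hy)
  simpa using hy'.symm

noncomputable def reps (n : ℕ) (A : Finset (ZMod n)) : Finset ℤ :=
  {x ∈ Icc 1 (n : ℤ) | (x : ZMod n) ∈ A}

theorem exists_mem_reps_intCast_eq_iff [NeZero n] {A : Finset (ZMod n)} {a : ZMod n} :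
    (∃ x ∈ reps n A, (x : ZMod n) = a) ↔ a ∈ A := by
  refine ⟨fun ⟨x, hx, hxa⟩ => hxa ▸ (mem_filter.1 hx).2, fun ha => ?_⟩
  obtain ⟨t, ht⟩ := exists_add_mul_mem_Icc (n := n) a.cast
  have hcast : ((a.cast + t * n : ℤ) : ZMod n) = a := by simp
  exact ⟨_, mem_filter.2 ⟨by simpa using ht, by rwa [hcast]⟩, hcast⟩

theorem card_reps [NeZero n] (A : Finset (ZMod n)) : #(reps n A) = #A := by
  refine card_nbij (fun x : ℤ => (x : ZMod n)) (fun x hx => (mem_filter.1 hx).2) ?_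
    fun a ha => exists_mem_reps_intCast_eq_iff.2 ha
  exact intCast_injOn_Icc.mono fun x hx => by simpa using (mem_filter.1 hx).1

end Residues

section Streams

variable {n : ℕ}

def diagShift (n : ℕ) (t : ℤ) (p : ℤ × ℤ) : ℤ × ℤ := (p.1 + t * n, p.2 + t * n)

def box (n : ℕ) : Set (ℤ × ℤ) := Set.Icc 1 (n : ℤ) ×ˢ Set.Icc 1 (n : ℤ)

def periodicClosure (n : ℕ) (M : Set (ℤ × ℤ)) : Set (ℤ × ℤ) :=
  {p | ∃ m ∈ M, ∃ t : ℤ, p = diagShift n t m}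

@[simp]
theorem diagShift_zero (p : ℤ × ℤ) : diagShift n 0 p = p := by
  simp [diagShift]

@[simp]
theorem diagShift_diagShift (s t : ℤ) (p : ℤ × ℤ) :
    diagShift n s (diagShift n t p) = diagShift n (t + s) p := by
  ext <;> simp only [diagShift] <;> ring

theorem add_diag_eq_diagShift (t : ℤ) (p : ℤ × ℤ) :
    ((diagShift n t p).1 + n, (diagShift n t p).2 + n) = diagShift n (t + 1) p := by
  ext <;> simp only [diagShift] <;> ring

@[simp]
theorem intCast_diagShift_fst (t : ℤ) (p : ℤ × ℤ) :
    ((diagShift n t p).1 : ZMod n) = p.1 := by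
  simp [diagShift]

@[simp]
theorem intCast_diagShift_snd (t : ℤ) (p : ℤ × ℤ) :
    ((diagShift n t p).2 : ZMod n) = p.2 := by
  simp [diagShift]

theorem mem_iff_diagShift_mem {S : Set (ℤ × ℤ)}
    (hS : ∀ p : ℤ × ℤ, p ∈ S ↔ ((p.1 + n, p.2 + n) : ℤ × ℤ) ∈ S) (p : ℤ × ℤ) (t : ℤ) :
    p ∈ S ↔ diagShift n t p ∈ S := by
  induction t using Int.induction_on with
  | zero => simp
  | succ i ih => rw [ih, hS, add_diag_eq_diagShift]
  | pred i ih => rw [ih, hS (diagShift n (-i - 1) p), add_diag_eq_diagShift, sub_add_cancel]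

variable {M : Set (ℤ × ℤ)}

theorem subset_periodicClosure : M ⊆ periodicClosure n M := fun m hm => ⟨m, hm, 0, by simp⟩

theorem mem_periodicClosure_iff_add_diag (p : ℤ × ℤ) :
    p ∈ periodicClosure n M ↔ ((p.1 + n, p.2 + n) : ℤ × ℤ) ∈ periodicClosure n M := by
  constructor
  · rintro ⟨m, hm, t, rfl⟩
    exact ⟨m, hm, t + 1, add_diag_eq_diagShift t m⟩
  · rintro ⟨m, hm, t, h⟩
    refine ⟨m, hm, t - 1, ?_⟩
    obtain ⟨h1, h2⟩ := Prod.ext_iff.1 h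
    simp only [diagShift] at h1 h2
    ext <;> simp only [diagShift] <;> linarith

theorem isChain_periodicClosure (hM : M ⊆ box n) (hchain : IsChain Prod.StrongLT M) :
    IsChain Prod.StrongLT (periodicClosure n M) := by
  rintro _ ⟨m, hm, t, rfl⟩ _ ⟨m', hm', t', rfl⟩ hne
  rcases lt_trichotomy t t' with h | rfl | h
  · exact Or.inl ⟨add_mul_lt_add_mul (hM hm).1 (hM hm').1 h,
      add_mul_lt_add_mul (hM hm).2 (hM hm').2 h⟩
  · rcases hchain hm hm' fun h => hne (h ▸ rfl) with ⟨h1, h2⟩ | ⟨h1, h2⟩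
    · exact Or.inl ⟨add_lt_add_left h1 _, add_lt_add_left h2 _⟩
    · exact Or.inr ⟨add_lt_add_left h1 _, add_lt_add_left h2 _⟩
  · exact Or.inr ⟨add_mul_lt_add_mul (hM hm').1 (hM hm).1 h,
      add_mul_lt_add_mul (hM hm').2 (hM hm).2 h⟩

theorem periodicClosure_inter_box (hM : M ⊆ box n) : periodicClosure n M ∩ box n = M := by
  refine Set.Subset.antisymm ?_ fun m hm => ⟨subset_periodicClosure hm, hM hm⟩
  rintro _ ⟨⟨m, hm, t, rfl⟩, hbox⟩
  obtain rfl : t = 0 := eq_zero_of_add_mul_mem_Icc (hM hm).1 hbox.1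
  simpa using hm

theorem exists_mem_periodicClosure_fst_intCast_eq_iff (a : ZMod n) :
    (∃ p ∈ periodicClosure n M, (p.1 : ZMod n) = a) ↔ ∃ p ∈ M, (p.1 : ZMod n) = a := by
  refine ⟨?_, fun ⟨p, hp, h⟩ => ⟨p, subset_periodicClosure hp, h⟩⟩
  rintro ⟨_, ⟨m, hm, t, rfl⟩, h⟩
  exact ⟨m, hm, by simpa using h⟩

theorem exists_mem_periodicClosure_snd_intCast_eq_iff (b : ZMod n) :
    (∃ p ∈ periodicClosure n M, (p.2 : ZMod n) = b) ↔ ∃ p ∈ M, (p.2 : ZMod n) = b := by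
  refine ⟨?_, fun ⟨p, hp, h⟩ => ⟨p, subset_periodicClosure hp, h⟩⟩
  rintro ⟨_, ⟨m, hm, t, rfl⟩, h⟩
  exact ⟨m, hm, by simpa using h⟩

theorem IsStream.isChain {S : Set (ℤ × ℤ)} (hS : IsStream n S) : IsChain Prod.StrongLT S :=
  hS.2

theorem IsStream.eq_periodicClosure_inter_box {S : Set (ℤ × ℤ)} (hS : IsStream n S)
    (hbox : ∀ p ∈ S, ∃ t : ℤ, diagShift n t p ∈ box n) :
    S = periodicClosure n (S ∩ box n) := by
  refine Set.Subset.antisymm (fun p hp => ?_) ?_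
  · obtain ⟨t, ht⟩ := hbox p hp
    exact ⟨_, ⟨(mem_iff_diagShift_mem hS.1 p t).1 hp, ht⟩, -t, by simp⟩
  · rintro _ ⟨m, ⟨hm, -⟩, t, rfl⟩
    exact (mem_iff_diagShift_mem hS.1 m t).1 hm

end Streams

section StZero

variable {n : ℕ} {A B : Finset (ZMod n)}

theorem stZero_eq_periodicClosure :
    stZero n A B = periodicClosure n (rankMatching (reps n A) (reps n B)) := by
  ext p
  simp only [stZero, periodicClosure, rankMatching, reps, rank, filter_filter, coe_filter,
    mem_product, mem_filter, Set.mem_ofPred_eq, diagShift, Prod.exists]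
  constructor
  · rintro ⟨a, b, t, ha, hb, hA, hB, hrank, rfl⟩
    exact ⟨a, b, ⟨⟨⟨ha, hA⟩, hb, hB⟩, hrank⟩, t, rfl⟩
  · rintro ⟨a, b, ⟨⟨⟨ha, hA⟩, hb, hB⟩, hrank⟩, t, rfl⟩
    exact ⟨a, b, t, ha, hb, hA, hB, hrank, rfl⟩

theorem rankMatching_reps_subset_box :
    (rankMatching (reps n A) (reps n B) : Set (ℤ × ℤ)) ⊆ box n := by
  intro q hq
  obtain ⟨ha, hb⟩ := mem_product.1 (mem_filter.1 hq).1
  exact ⟨by simpa using (mem_filter.1 ha).1, by simpa using (mem_filter.1 hb).1⟩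

variable [NeZero n]

theorem isABStream_stZero (hAB : #A = #B) : IsABStream n A B (stZero n A B) := by
  have hreps : #(reps n A) = #(reps n B) := by rw [card_reps, card_reps, hAB]
  rw [stZero_eq_periodicClosure]
  refine ⟨⟨fun p => mem_periodicClosure_iff_add_diag p,
    isChain_periodicClosure rankMatching_reps_subset_box isChain_rankMatching⟩,
    fun a => ?_, fun b => ?_⟩
  · rw [exists_mem_periodicClosure_fst_intCast_eq_iff, ← exists_mem_reps_intCast_eq_iff]
    conv_lhs => rw [← image_fst_rankMatching hreps]
    exact exists_mem_image
  · rw [exists_mem_periodicClosure_snd_intCast_eq_iff, ← exists_mem_reps_intCast_eq_iff]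
    conv_lhs => rw [← image_snd_rankMatching hreps]
    exact exists_mem_image

theorem IsABStream.inter_box_eq {S : Set (ℤ × ℤ)} (hS : IsABStream n A B S)
    (hcard : (S ∩ box n).ncard = #A) (hAB : #A = #B) :
    S ∩ box n = rankMatching (reps n A) (reps n B) := by
  have hfin : (S ∩ box n).Finite :=
    ((Set.finite_Icc _ _).prod (Set.finite_Icc _ _)).subset Set.inter_subset_right
  rw [← hfin.coe_toFinset]
  congr 1
  refine eq_rankMatching_of_isChain (fun q hq => ?_) ?_ ?_ ?_
  · obtain ⟨hqS, hq1, hq2⟩ := hfin.mem_toFinset.1 hq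
    exact mem_product.2 ⟨mem_filter.2 ⟨by simpa using hq1, (hS.2.1 _).2 ⟨q, hqS, rfl⟩⟩,
      mem_filter.2 ⟨by simpa using hq2, (hS.2.2 _).2 ⟨q, hqS, rfl⟩⟩⟩
  · rw [hfin.coe_toFinset]
    exact hS.1.isChain.mono Set.inter_subset_left
  · rw [← Set.ncard_eq_toFinset_card _ hfin, hcard, card_reps]
  · rw [← Set.ncard_eq_toFinset_card _ hfin, hcard, card_reps, hAB]

theorem IsABStream.eq_stZero {S : Set (ℤ × ℤ)} (hS : IsABStream n A B S)
    (hcard : (S ∩ box n).ncard = #A) (hAB : #A = #B) : S = stZero n A B := by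
  have hreps : #(reps n A) = #(reps n B) := by rw [card_reps, card_reps, hAB]
  have hbox := hS.inter_box_eq hcard hAB
  rw [stZero_eq_periodicClosure, ← hbox]
  refine hS.1.eq_periodicClosure_inter_box fun p hp => ?_
  obtain ⟨t, ht⟩ := exists_add_mul_mem_Icc (n := n) p.1
  -- the translate of `p` into the strip `1 ≤ i ≤ n` shares its row with a point of the box
  have hq : diagShift n t p ∈ S := (mem_iff_diagShift_mem hS.1.1 p t).1 hp
  have hq1 : (diagShift n t p).1 ∈ reps n A :=
    mem_filter.2 ⟨by simpa [diagShift] using ht, (hS.2.1 _).2 ⟨_, hq, rfl⟩⟩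
  rw [← image_fst_rankMatching hreps, mem_image] at hq1
  obtain ⟨m, hm, hmq⟩ := hq1
  rw [← mem_coe, ← hbox] at hm
  exact ⟨t, hS.1.isChain.fst_injOn hm.1 hq hmq ▸ hm.2⟩

end StZero

theorem stmt2 (n k : ℕ) (hn : 0 < n) (A B : Finset (ZMod n))
    (hA : A.card = k) (hB : B.card = k) :
    (IsABStream n A B (stZero n A B) ∧
      (stZero n A B ∩ Set.Icc (1 : ℤ) n ×ˢ Set.Icc (1 : ℤ) n).ncard = k) ∧
    ∀ S : Set (ℤ × ℤ), IsABStream n A B S →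
      (S ∩ Set.Icc (1 : ℤ) n ×ˢ Set.Icc (1 : ℤ) n).ncard = k → S = stZero n A B := by
  have : NeZero n := ⟨hn.ne'⟩
  have hAB : #A = #B := hA.trans hB.symm
  refine ⟨⟨isABStream_stZero hAB, ?_⟩, fun S hS hSk => hS.eq_stZero (hSk.trans hA.symm) hAB⟩
  change (stZero n A B ∩ box n).ncard = k
  rw [stZero_eq_periodicClosure, periodicClosure_inter_box rankMatching_reps_subset_box,
    Set.ncard_coe_finset, card_rankMatching (by rw [card_reps, card_reps, hAB]), card_reps, hA]
end

section
/- Let A, B ⊆ ℤ/nℤ with |A| = |B| = k ≥ 1, and write st₀(A,B) = {…, (i₋₁, j₋₁), (i₀, j₀), (i₁, j₁), …} with (i_t, j_t) strictly northwest of (i_{t+1}, j_{t+1}) for all t. Then for each r ∈ ℤ the set st_r(A,B) := {(i_t, j_{t+r}) : t ∈ ℤ} is an (A,B)-stream, and every (A,B)-stream equals st_r(A,B) for exactly one r ∈ ℤ. -/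
/-!
Both coordinate sequences of `e` increase strictly, and the rows (columns) met by any
`(A,B)`-stream are exactly the integers with residue in `A` (in `B`). A stream is a chain, so it
is the graph of an increasing bijection from the rows of `e` onto its columns; an increasing
bijection of `ℤ` onto itself is a translation, so the stream pairs the `t`-th row of `e` with its
`(t + r)`-th column. Conversely, translation by `(n,n)` shifts the index of `e` by a fixed period,
which makes every such pairing translation-invariant.
-/

open Set Function

namespace Int

theorem exists_eq_add_of_strictMono_of_surjective {f : ℤ → ℤ} (hm : StrictMono f)
    (hs : Surjective f) : ∃ c, ∀ t, f t = t + c := by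
  have hstep (t : ℤ) : f (t + 1) = f t + 1 := by
    obtain ⟨u, hu⟩ := hs (f t + 1)
    have htu : t + 1 ≤ u := hm.lt_iff_lt.1 (by omega)
    have := hm.monotone htu
    have := hm (lt_add_one t)
    omega
  refine ⟨f 0, fun t => ?_⟩
  simpa [add_comm] using AddConstMapClass.map_add_int (⟨f, hstep⟩ : AddConstMap ℤ ℤ 1 1) 0 t

theorem exists_add_of_strictMono_of_range_eq {a b : ℤ → ℤ} (ha : StrictMono a)
    (hb : StrictMono b) (h : Set.range b = Set.range a) : ∃ c, ∀ t, b t = a (t + c) := by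
  have hφ (t : ℤ) : b t ∈ Set.range a := h ▸ mem_range_self t
  choose φ hφ using hφ
  have hφm : StrictMono φ := fun s t hst => ha.lt_iff_lt.1 (by rw [hφ, hφ]; exact hb hst)
  have hφs : Surjective φ := fun s => by
    obtain ⟨t, ht⟩ : a s ∈ Set.range b := h ▸ mem_range_self s
    exact ⟨t, ha.injective (by rw [hφ, ht])⟩
  obtain ⟨c, hc⟩ := exists_eq_add_of_strictMono_of_surjective hφm hφs
  exact ⟨c, fun t => by rw [← hc, hφ]⟩

end Int

section Streams

variable {n : ℕ} {A B : Finset (ZMod n)} {S : Set (ℤ × ℤ)}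

theorem IsStream.add_mul_mem (hS : IsStream n S) {p : ℤ × ℤ} (hp : p ∈ S) (m : ℤ) :
    (p.1 + m * n, p.2 + m * n) ∈ S := by
  induction m using Int.induction_on with
  | zero => simpa using hp
  | succ m ih => simpa [add_mul, add_assoc] using (hS.1 _).1 ih
  | pred m ih => exact (hS.1 _).2 (by simpa [sub_mul, add_assoc] using ih)

theorem IsStream.fst_lt_iff_snd_lt (hS : IsStream n S) {p q : ℤ × ℤ} (hp : p ∈ S)
    (hq : q ∈ S) : p.1 < q.1 ↔ p.2 < q.2 := by
  by_cases hpq : p = q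
  · simp [hpq]
  · rcases hS.2 p hp q hq hpq with h | h <;> omega

theorem IsStream.injOn_fst (hS : IsStream n S) : InjOn Prod.fst S := fun p hp q hq h => by
  by_contra hpq
  rcases hS.2 p hp q hq hpq with h' | h' <;> omega

theorem isStream_range {P : ℤ → ℤ × ℤ} {c : ℤ}
    (hP : ∀ t, P (t + c) = P t + ((n : ℤ), (n : ℤ)))
    (h1 : StrictMono fun t => (P t).1) (h2 : StrictMono fun t => (P t).2) :
    IsStream n (range P) := by
  refine ⟨fun p => ⟨?_, ?_⟩, ?_⟩
  · rintro ⟨t, rfl⟩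
    exact ⟨t + c, hP t⟩
  · rintro ⟨t, ht⟩
    refine ⟨t - c, add_right_cancel (b := ((n : ℤ), (n : ℤ))) ?_⟩
    rw [← hP, sub_add_cancel, ht]
    rfl
  · rintro _ ⟨s, rfl⟩ _ ⟨t, rfl⟩ hst
    rcases lt_trichotomy s t with h | rfl | h
    · exact .inl ⟨h1 h, h2 h⟩
    · exact absurd rfl hst
    · exact .inr ⟨h1 h, h2 h⟩

theorem IsABStream.image_fst (hS : IsABStream n A B S) :
    Prod.fst '' S = {x : ℤ | (x : ZMod n) ∈ A} := by
  ext x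
  refine ⟨?_, fun hx => ?_⟩
  · rintro ⟨p, hp, rfl⟩
    exact (hS.2.1 _).2 ⟨p, hp, rfl⟩
  · obtain ⟨p, hp, hpx⟩ := (hS.2.1 _).1 hx
    obtain ⟨m, hm⟩ := (ZMod.intCast_eq_intCast_iff_dvd_sub _ _ _).1 hpx
    exact ⟨_, hS.1.add_mul_mem hp m, by simp only; linarith⟩

theorem IsABStream.image_snd (hS : IsABStream n A B S) :
    Prod.snd '' S = {y : ℤ | (y : ZMod n) ∈ B} := by
  ext y
  refine ⟨?_, fun hy => ?_⟩
  · rintro ⟨p, hp, rfl⟩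
    exact (hS.2.2 _).2 ⟨p, hp, rfl⟩
  · obtain ⟨p, hp, hpy⟩ := (hS.2.2 _).1 hy
    obtain ⟨m, hm⟩ := (ZMod.intCast_eq_intCast_iff_dvd_sub _ _ _).1 hpy
    exact ⟨_, hS.1.add_mul_mem hp m, by simp only; linarith⟩

theorem IsABStream.of_image_eq (hS : IsABStream n A B S) {T : Set (ℤ × ℤ)} (hT : IsStream n T)
    (hfst : Prod.fst '' T = Prod.fst '' S) (hsnd : Prod.snd '' T = Prod.snd '' S) :
    IsABStream n A B T := by
  refine ⟨hT, fun a => ?_, fun b => ?_⟩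
  · rw [hS.2.1, ← exists_mem_image (p := fun x : ℤ => (x : ZMod n) = a), ← hfst,
      exists_mem_image]
  · rw [hS.2.2, ← exists_mem_image (p := fun y : ℤ => (y : ZMod n) = b), ← hsnd,
      exists_mem_image]

end Streams

section StreamShift

variable {n : ℕ} {A B : Finset (ZMod n)} {e : ℤ → ℤ × ℤ}

/-- For `e` enumerating `st₀(A,B)` from northwest to southeast, this is the paper's
`st_r(A,B)`. -/
def streamShift (e : ℤ → ℤ × ℤ) (r : ℤ) : Set (ℤ × ℤ) :=
  range fun t => ((e t).1, (e (t + r)).2)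

theorem image_fst_streamShift (r : ℤ) : Prod.fst '' streamShift e r = Prod.fst '' range e := by
  simp only [streamShift, ← range_comp]
  rfl

theorem image_snd_streamShift (r : ℤ) : Prod.snd '' streamShift e r = Prod.snd '' range e := by
  simp only [streamShift, ← range_comp]
  exact (Equiv.addRight r).surjective.range_comp fun t => (e t).2

theorem IsStream.exists_period (he : IsStream n (range e)) (ha : StrictMono fun t => (e t).1) :
    ∃ c, ∀ t, e (t + c) = e t + ((n : ℤ), (n : ℤ)) := by
  have hrange : range (fun t => (e t).1 + n) = range fun t => (e t).1 := by
    ext x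
    constructor
    · rintro ⟨t, rfl⟩
      obtain ⟨u, hu⟩ := (he.1 (e t)).1 (mem_range_self t)
      exact ⟨u, by simp [hu]⟩
    · rintro ⟨t, rfl⟩
      obtain ⟨u, hu⟩ := (he.1 ((e t).1 - n, (e t).2 - n)).2 (by simp)
      exact ⟨u, by simp [hu]⟩
  obtain ⟨c, hc⟩ := Int.exists_add_of_strictMono_of_range_eq ha (ha.add_const _) hrange
  refine ⟨c, fun t => ?_⟩
  obtain ⟨u, hu⟩ := (he.1 (e t)).1 (mem_range_self t)
  obtain rfl : u = t + c := ha.injective (by simp [hu, hc])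
  exact hu

theorem isStream_streamShift (he : IsStream n (range e)) (ha : StrictMono fun t => (e t).1)
    (hb : StrictMono fun t => (e t).2) (r : ℤ) : IsStream n (streamShift e r) := by
  obtain ⟨c, hc⟩ := he.exists_period ha
  refine isStream_range (c := c) (fun t => ?_) ha (hb.comp (strictMono_id.add_const r))
  simp [add_right_comm t c r, hc]

theorem streamShift_injective (ha : Injective fun t => (e t).1)
    (hb : Injective fun t => (e t).2) : Injective (streamShift e) := by
  intro r r' h
  obtain ⟨t, ht⟩ : ((e 0).1, (e (0 + r)).2) ∈ streamShift e r' := h ▸ mem_range_self 0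
  obtain ⟨h1, h2⟩ := Prod.mk.inj ht
  obtain rfl : t = 0 := ha h1
  simpa using (hb h2).symm

theorem IsABStream.exists_eq_streamShift (he : IsABStream n A B (range e))
    (ha : StrictMono fun t => (e t).1) (hb : StrictMono fun t => (e t).2) {S : Set (ℤ × ℤ)}
    (hS : IsABStream n A B S) : ∃ r, S = streamShift e r := by
  have hfst : Prod.fst '' S = range fun t => (e t).1 := by
    rw [hS.image_fst, ← he.image_fst, ← range_comp]; rfl
  have hsnd : Prod.snd '' S = range fun t => (e t).2 := by
    rw [hS.image_snd, ← he.image_snd, ← range_comp]; rfl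
  have hP (t : ℤ) : (e t).1 ∈ Prod.fst '' S := hfst ▸ mem_range_self t
  choose P hPS hP1 using hP
  have hSP : S = range P := by
    ext p
    refine ⟨fun hp => ?_, ?_⟩
    · obtain ⟨t, ht⟩ : p.1 ∈ range fun t => (e t).1 := hfst ▸ mem_image_of_mem _ hp
      exact ⟨t, hS.1.injOn_fst (hPS t) hp (by rw [hP1]; exact ht)⟩
    · rintro ⟨t, rfl⟩
      exact hPS t
  have hP2 : StrictMono fun t => (P t).2 := fun s t hst =>
    (hS.1.fst_lt_iff_snd_lt (hPS s) (hPS t)).1 (by rw [hP1, hP1]; exact ha hst)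
  have hrange : range (fun t => (P t).2) = range fun t => (e t).2 := by
    rw [← hsnd, hSP, ← range_comp]; rfl
  obtain ⟨r, hr⟩ := Int.exists_add_of_strictMono_of_range_eq hb hP2 hrange
  exact ⟨r, hSP.trans (congrArg range (funext fun t => Prod.ext (hP1 t) (hr t)))⟩

end StreamShift

theorem stmt3_general (n : ℕ) (A B : Finset (ZMod n))
    (e : ℤ → ℤ × ℤ)
    (he : IsABStream n A B (Set.range e))
    (hmono : ∀ t : ℤ, (e t).1 < (e (t + 1)).1 ∧ (e t).2 < (e (t + 1)).2) :
    (∀ r : ℤ, IsABStream n A B (Set.range fun t => ((e t).1, (e (t + r)).2))) ∧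
    ∀ S : Set (ℤ × ℤ), IsABStream n A B S →
      ∃! r : ℤ, S = Set.range fun t => ((e t).1, (e (t + r)).2) := by
  have ha : StrictMono fun t => (e t).1 := strictMono_int_of_lt_succ fun t => (hmono t).1
  have hb : StrictMono fun t => (e t).2 := strictMono_int_of_lt_succ fun t => (hmono t).2
  refine ⟨fun r => he.of_image_eq (isStream_streamShift he.1 ha hb r)
    (image_fst_streamShift r) (image_snd_streamShift r), fun S hS => ?_⟩
  obtain ⟨r, rfl⟩ := he.exists_eq_streamShift ha hb hS
  exact ⟨r, rfl, fun r' h => streamShift_injective ha.injective hb.injective h.symm⟩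

theorem stmt3 (n k : ℕ) (hn : 0 < n) (hk : 0 < k) (A B : Finset (ZMod n))
    (hA : A.card = k) (hB : B.card = k)
    (e : ℤ → ℤ × ℤ)
    (he : IsABStream n A B (Set.range e))
    (hbox : (Set.range e ∩ Set.Icc (1 : ℤ) n ×ˢ Set.Icc (1 : ℤ) n).ncard = k)
    (hmono : ∀ t : ℤ, (e t).1 < (e (t + 1)).1 ∧ (e t).2 < (e (t + 1)).2) :
    (∀ r : ℤ, IsABStream n A B (Set.range fun t => ((e t).1, (e (t + r)).2))) ∧
    ∀ S : Set (ℤ × ℤ), IsABStream n A B S →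
      ∃! r : ℤ, S = Set.range fun t => ((e t).1, (e (t + r)).2) :=
  stmt3_general n A B e he hmono
end

section
/- Let w be an extended affine permutation with Shi poset of width m, and let d : B_w → ℤ be any proper numbering of the balls of w. Then for every ball b, d(b - (n,n)) ≥ d(b) - m. -/
/-- The Shi relation `i ≤_S j` for an extended affine permutation `w`. -/
def ShiLe (n : ℕ) (w : ℤ → ℤ) (i j : ℤ) : Prop :=
  i = j ∨ (j < i ∧ w i < w j) ∨ w i + n < w j

/-- An antichain of the Shi poset of `w` on `{1,…,n}`. -/
def IsShiAntichain (n : ℕ) (w : ℤ → ℤ) (A : Finset ℤ) : Prop :=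
  A ⊆ Finset.Icc (1 : ℤ) n ∧
  ∀ i ∈ A, ∀ j ∈ A, i ≠ j → ¬ ShiLe n w i j ∧ ¬ ShiLe n w j i

/-- `m` is the width (maximal antichain size) of the Shi poset of `w`. -/
def IsShiWidth (n : ℕ) (w : ℤ → ℤ) (m : ℕ) : Prop :=
  (∃ A : Finset ℤ, IsShiAntichain n w A ∧ A.card = m) ∧
  ∀ A : Finset ℤ, IsShiAntichain n w A → A.card ≤ m

/-- A proper numbering of the balls `(i, w i)` of `w`, indexed by rows: monotone
(strictly northwest implies strictly smaller) and continuous (some ball weakly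
northwest is numbered one less). -/
def IsProper (w d : ℤ → ℤ) : Prop :=
  (∀ i j : ℤ, i < j → w i < w j → d i < d j) ∧
  (∀ j : ℤ, ∃ i : ℤ, i ≤ j ∧ w i ≤ w j ∧ d i = d j - 1)

/-- An `(n,n)`-invariant southeast chain of balls of `w` (identified by rows). -/
def IsChannelChain (n : ℕ) (w : ℤ → ℤ) (C : Set ℤ) : Prop :=
  (∀ i : ℤ, i ∈ C ↔ i + n ∈ C) ∧ ∀ i ∈ C, ∀ j ∈ C, i < j → w i < w j

/-- The density of such a chain: number of `(n,n)`-translate classes. -/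
noncomputable def chDensity (n : ℕ) (C : Set ℤ) : ℕ := (C ∩ Set.Icc (1 : ℤ) n).ncard

/-- A channel: an `(n,n)`-invariant southeast chain of maximal density. -/
def IsChannel (n : ℕ) (w : ℤ → ℤ) (C : Set ℤ) : Prop :=
  IsChannelChain n w C ∧
  ∀ D : Set ℤ, IsChannelChain n w D → chDensity n D ≤ chDensity n C

/-- `C₁` is southwest of `C₂`: every element of `C₁` has an element of `C₂`
weakly northeast of it. -/
def ChannelSW (n : ℕ) (w : ℤ → ℤ) (C₁ C₂ : Set ℤ) : Prop :=
  ∀ i ∈ C₁, ∃ j ∈ C₂, j ≤ i ∧ w i ≤ w j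

/-! Let `Δ` be the largest value of `d y - d (y - n)`: it is at most `n`, because the descent
path of length `n` from `y` (continuity witnesses, each strictly northwest and numbered one less)
ends weakly northwest of `y - n`. Along a descent path `z` starting where `Δ` is attained the drop
`d y - d (y - n)` cannot decrease, so it stays `Δ`; then `z (t + Δ)` and `z t - n` carry the same
number and are incomparable. Call a coordinate fast at `t` if it drops by more than `n` from `z t`
to `z (t + Δ)`; by incomparability at most one coordinate is fast at `t`.

Suppose `Δ > m`. Any `m + 1` consecutive balls of the path spread by at least `n` in some
coordinate, since otherwise their residues mod `n` form a Shi antichain. Hence some coordinate is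
fast at every `t`, and the other one moves by less than `n` per `Δ` steps. But two balls of the
path in the same residue class, `K n` apart, are at most `K Δ` steps apart because
`d y - d (y - K n) ≤ K Δ`, so that coordinate moves by `K n` in at most `K Δ` steps. -/

open Function

def IsNearSE (n : ℕ) (w : ℤ → ℤ) (u v : ℤ) : Prop :=
  u < v ∧ w u < w v ∧ v - u < n ∧ w v - w u < n

def IsDescentPath (w d : ℤ → ℤ) (z : ℕ → ℤ) : Prop :=
  ∀ t, z (t + 1) < z t ∧ w (z (t + 1)) < w (z t) ∧ d (z (t + 1)) = d (z t) - 1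

section Periodic

variable {n : ℕ} {w : ℤ → ℤ}

lemma map_add_mul_of_periodic (hper : ∀ i, w (i + n) = w i + n) (k i : ℤ) :
    w (i + k * n) = w i + k * n := by
  induction k using Int.induction_on generalizing i with
  | zero => simp
  | succ k ih => rw [add_one_mul, ← add_assoc, hper, ih]; ring
  | pred k ih =>
    have := hper (i + (-k - 1) * n)
    rw [show i + (-(k : ℤ) - 1) * n + n = i + -k * n by ring, ih] at this
    linarith

lemma map_sub_mul_of_periodic (hper : ∀ i, w (i + n) = w i + n) (k i : ℤ) :
    w (i - k * n) = w i - k * n := by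
  simpa [neg_mul, ← sub_eq_add_neg] using map_add_mul_of_periodic hper (-k) i

lemma map_sub_of_periodic (hper : ∀ i, w (i + n) = w i + n) (i : ℤ) : w (i - n) = w i - n := by
  simpa using map_sub_mul_of_periodic hper 1 i

end Periodic

def resid (n : ℕ) (i : ℤ) : ℤ := (i - 1) % n + 1

lemma resid_mem_Icc {n : ℕ} (hn : 0 < n) (i : ℤ) : resid n i ∈ Finset.Icc (1 : ℤ) n := by
  have h₀ := Int.emod_nonneg (i - 1) (Int.natCast_pos.2 hn).ne'
  have h₁ := Int.emod_lt_of_pos (i - 1) (Int.natCast_pos.2 hn)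
  simp only [Finset.mem_Icc, resid]
  omega

lemma exists_eq_resid_add_mul (n : ℕ) (i : ℤ) : ∃ q : ℤ, i = resid n i + q * n :=
  ⟨(i - 1) / n, by have := Int.mul_ediv_add_emod (i - 1) n; simp only [resid]; linarith⟩

lemma IsNearSE.shi_incomparable {n : ℕ} {w : ℤ → ℤ} {i j : ℤ} (h : IsNearSE n w i j) :
    i ≠ j ∧ ¬ ShiLe n w i j ∧ ¬ ShiLe n w j i := by
  obtain ⟨h₁, h₂, h₃, h₄⟩ := h
  unfold ShiLe
  omega

/-- The residues differ by `v - u` or by `v - u - n`, so they form a near southeast pair in one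
order or the other. -/
lemma IsNearSE.resid_shi_incomparable {n : ℕ} {w : ℤ → ℤ} (hn : 0 < n)
    (hper : ∀ i, w (i + n) = w i + n) {u v : ℤ} (h : IsNearSE n w u v) :
    resid n u ≠ resid n v ∧ ¬ ShiLe n w (resid n u) (resid n v) ∧
      ¬ ShiLe n w (resid n v) (resid n u) := by
  obtain ⟨a, ha⟩ := exists_eq_resid_add_mul n u
  obtain ⟨b, hb⟩ := exists_eq_resid_add_mul n v
  have hwu := map_add_mul_of_periodic hper a (resid n u)
  have hwv := map_add_mul_of_periodic hper b (resid n v)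
  rw [← ha] at hwu
  rw [← hb] at hwv
  have hu := Finset.mem_Icc.1 (resid_mem_Icc hn u)
  have hv := Finset.mem_Icc.1 (resid_mem_Icc hn v)
  obtain ⟨h₁, h₂, h₃, h₄⟩ := h
  have hnpos : (0 : ℤ) < n := Int.natCast_pos.2 hn
  have hlo : -1 < b - a :=
    lt_of_mul_lt_mul_right (by linarith : (-1 : ℤ) * n < (b - a) * n) hnpos.le
  have hhi : b - a < 2 :=
    lt_of_mul_lt_mul_right (by linarith : (b - a) * n < 2 * n) hnpos.le
  obtain hab | hab : b = a ∨ b = a + 1 := by omega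
  · subst hab
    exact (show IsNearSE n w (resid n u) (resid n v) by
      refine ⟨?_, ?_, ?_, ?_⟩ <;> linarith).shi_incomparable
  · subst hab
    obtain ⟨hne, hvu, huv⟩ := (show IsNearSE n w (resid n v) (resid n u) by
      refine ⟨?_, ?_, ?_, ?_⟩ <;> linarith).shi_incomparable
    exact ⟨hne.symm, huv, hvu⟩

lemma card_le_of_pairwise_isNearSE {n : ℕ} {w : ℤ → ℤ} {m : ℕ} (hn : 0 < n)
    (hper : ∀ i, w (i + n) = w i + n) (hm : ∀ A, IsShiAntichain n w A → A.card ≤ m)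
    {S : Finset ℤ} (hS : ∀ u ∈ S, ∀ v ∈ S, u < v → IsNearSE n w u v) : S.card ≤ m := by
  have hinc : ∀ u ∈ S, ∀ v ∈ S, u ≠ v → resid n u ≠ resid n v ∧
      ¬ ShiLe n w (resid n u) (resid n v) ∧ ¬ ShiLe n w (resid n v) (resid n u) := by
    intro u hu v hv huv
    rcases huv.lt_or_gt with h | h
    · exact (hS u hu v hv h).resid_shi_incomparable hn hper
    · obtain ⟨hne, hvu, huv⟩ := (hS v hv u hu h).resid_shi_incomparable hn hper
      exact ⟨hne.symm, huv, hvu⟩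
  have hinj : Set.InjOn (resid n) S := fun u hu v hv h =>
    by_contra fun huv => (hinc u hu v hv huv).1 h
  rw [← Finset.card_image_of_injOn hinj]
  refine hm _ ⟨fun r hr => ?_, fun r hr s hs hrs => ?_⟩
  · obtain ⟨u, -, rfl⟩ := Finset.mem_image.1 hr
    exact resid_mem_Icc hn u
  · obtain ⟨u, hu, rfl⟩ := Finset.mem_image.1 hr
    obtain ⟨v, hv, rfl⟩ := Finset.mem_image.1 hs
    exact (hinc u hu v hv (fun h => hrs (h ▸ rfl))).2

lemma add_le_of_strictAnti {f : ℕ → ℤ} (hf : StrictAnti f) (s k : ℕ) : f (s + k) + k ≤ f s := by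
  induction k with
  | zero => simp
  | succ k ih =>
    have : f (s + (k + 1)) < f (s + k) := hf (by omega)
    push_cast
    rw [← add_assoc]
    linarith

/-- Otherwise the residues of these `m + 1` balls form a Shi antichain. -/
lemma spread_of_strictAnti {n : ℕ} {w : ℤ → ℤ} {m : ℕ} (hn : 0 < n)
    (hper : ∀ i, w (i + n) = w i + n) (hm : ∀ A, IsShiAntichain n w A → A.card ≤ m)
    {z : ℕ → ℤ} (hz : StrictAnti z) (hwz : StrictAnti (w ∘ z)) (t : ℕ) :
    z (t + m) + n ≤ z t ∨ w (z (t + m)) + n ≤ w (z t) := by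
  by_contra! h
  have hinj : Injective fun j => z (t + j) := hz.injective.comp (add_right_injective t)
  have hcard := card_le_of_pairwise_isNearSE hn hper hm
    (S := (Finset.range (m + 1)).image fun j => z (t + j)) ?_
  · rw [Finset.card_image_of_injective _ hinj, Finset.card_range] at hcard
    omega
  simp only [Finset.mem_image, Finset.mem_range]
  rintro _ ⟨a, ha, rfl⟩ _ ⟨b, hb, rfl⟩ hab
  have hba : t + b < t + a := hz.lt_iff_gt.1 hab
  have hzb := hz.antitone (show t ≤ t + b by omega)
  have hza := hz.antitone (show t + a ≤ t + m by omega)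
  have hwzb := hwz.antitone (show t ≤ t + b by omega)
  have hwza := hwz.antitone (show t + a ≤ t + m by omega)
  simp only [comp_apply] at hwzb hwza
  exact ⟨hab, hwz hba, by linarith, by linarith⟩

section Sequences

variable {f g h : ℕ → ℤ} {n m Δ : ℕ}

/-- As `g` is not fast at `t`, it cannot spread by `n` over `[t + 1, t + 1 + m] ⊆ [t + 1, t + Δ]`,
so `f` does. -/
lemma fast_succ (hf : StrictAnti f) (hg : StrictAnti g) (hmΔ : m < Δ)
    (hspread : ∀ t, f (t + m) + n ≤ f t ∨ g (t + m) + n ≤ g t)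
    (hexcl : ∀ t, f (t + Δ) + n < f t → g t < g (t + Δ) + n)
    {t : ℕ} (ht : f (t + Δ) + n < f t) : f (t + 1 + Δ) + n < f (t + 1) := by
  have hgt := hexcl t ht
  rcases hspread (t + 1) with h | h
  · linarith [hf (show t + 1 + m < t + 1 + Δ by omega)]
  · linarith [hg (Nat.lt_succ_self t), hg.antitone (show t + 1 + m ≤ t + Δ by omega)]

lemma forall_fast (hf : StrictAnti f) (hg : StrictAnti g) (hmΔ : m < Δ)
    (hspread : ∀ t, f (t + m) + n ≤ f t ∨ g (t + m) + n ≤ g t)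
    (hexcl : ∀ t, f (t + Δ) + n < f t → g t < g (t + Δ) + n)
    (h₀ : f (0 + Δ) + n < f 0) (t : ℕ) : f (t + Δ) + n < f t := by
  induction t with
  | zero => exact h₀
  | succ t ih => exact fast_succ hf hg hmΔ hspread hexcl ih

lemma forall_slow_or_forall_slow (hf : StrictAnti f) (hg : StrictAnti g) (hmΔ : m < Δ)
    (hspread : ∀ t, f (t + m) + n ≤ f t ∨ g (t + m) + n ≤ g t)
    (hexcl_f : ∀ t, f (t + Δ) + n < f t → g t < g (t + Δ) + n)
    (hexcl_g : ∀ t, g (t + Δ) + n < g t → f t < f (t + Δ) + n) :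
    (∀ t, g t < g (t + Δ) + n) ∨ (∀ t, f t < f (t + Δ) + n) := by
  have hspread' : ∀ t, g (t + m) + n ≤ g t ∨ f (t + m) + n ≤ f t := fun t => (hspread t).symm
  rcases hspread 0 with h | h
  · left
    have h₀ : f (0 + Δ) + n < f 0 := by linarith [hf (show 0 + m < 0 + Δ by omega)]
    exact fun t => hexcl_f t (forall_fast hf hg hmΔ hspread hexcl_f h₀ t)
  · right
    have h₀ : g (0 + Δ) + n < g 0 := by linarith [hg (show 0 + m < 0 + Δ by omega)]
    exact fun t => hexcl_g t (forall_fast hg hf hmΔ hspread' hexcl_g h₀ t)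

lemma add_le_add_mul_of_slow (hh : Antitone h) (hslow : ∀ t, h t < h (t + Δ) + n)
    {t t' K : ℕ} (ht' : t' ≤ t + K * Δ) : h t + K ≤ h t' + K * n := by
  suffices ∀ K : ℕ, h t + K ≤ h (t + K * Δ) + K * n by
    linarith [this K, hh ht']
  intro K
  induction K with
  | zero => simp
  | succ K ih =>
    have := hslow (t + K * Δ)
    rw [add_assoc, ← add_one_mul] at this
    push_cast
    linarith

end Sequences

lemma exists_lt_eq_sub_mul {z : ℕ → ℤ} (hz : StrictAnti z) {n : ℕ} (hn : 0 < n) :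
    ∃ t t' K : ℕ, t < t' ∧ 0 < K ∧ z t' = z t - K * n := by
  have : NeZero n := ⟨hn.ne'⟩
  obtain ⟨a, b, hab, heq⟩ := Finite.exists_ne_map_eq_of_infinite fun t => (z t : ZMod n)
  have hdvd : ∀ {t t'}, (z t : ZMod n) = z t' → t < t' → ∃ K : ℕ, 0 < K ∧ z t' = z t - K * n := by
    intro t t' h htt'
    obtain ⟨c, hc⟩ := (ZMod.intCast_eq_intCast_iff_dvd_sub _ _ n).1 h.symm
    have hc_pos : 0 < c := pos_of_mul_pos_right (by linarith [hz htt']) (Int.natCast_pos.2 hn).le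
    lift c to ℕ using hc_pos.le
    exact ⟨c, by exact_mod_cast hc_pos, by linarith⟩
  rcases hab.lt_or_gt with h | h
  · obtain ⟨K, hK⟩ := hdvd heq h
    exact ⟨a, b, K, h, hK⟩
  · obtain ⟨K, hK⟩ := hdvd heq.symm h
    exact ⟨b, a, K, h, hK⟩

lemma le_sub_mul_add_mul {n : ℕ} {d : ℤ → ℤ} {Δ : ℤ} (hΔ : ∀ y, d y - d (y - n) ≤ Δ)
    (y : ℤ) (K : ℕ) : d y ≤ d (y - K * n) + K * Δ := by
  induction K with
  | zero => simp
  | succ K ih =>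
    have := hΔ (y - K * n)
    rw [sub_sub, ← add_one_mul] at this
    push_cast
    linarith

section Proper

variable {n : ℕ} {w d : ℤ → ℤ}

lemma IsProper.lt_of_le_of_le_of_ne (hd : IsProper w d) (hinj : Injective w) {a b : ℤ}
    (hab : a ≤ b) (hwab : w a ≤ w b) (hne : a ≠ b) : d a < d b :=
  hd.1 a b (hab.lt_of_ne hne) (hwab.lt_of_ne (hinj.ne hne))

lemma IsProper.le_of_le_of_le (hd : IsProper w d) (hinj : Injective w) {a b : ℤ}
    (hab : a ≤ b) (hwab : w a ≤ w b) : d a ≤ d b := by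
  obtain rfl | hne := eq_or_ne a b
  · rfl
  · exact (hd.lt_of_le_of_le_of_ne hinj hab hwab hne).le

lemma IsProper.exists_descentPath (hd : IsProper w d) (hinj : Injective w) (x : ℤ) :
    ∃ z : ℕ → ℤ, z 0 = x ∧ IsDescentPath w d z := by
  choose p hp hwp hdp using hd.2
  have hne : ∀ j, p j ≠ j := fun j h => by have := hdp j; rw [h] at this; omega
  refine ⟨fun t => p^[t] x, rfl, fun t => ?_⟩
  simp only [iterate_succ_apply']
  exact ⟨(hp _).lt_of_ne (hne _), (hwp _).lt_of_ne (hinj.ne (hne _)), hdp _⟩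

namespace IsDescentPath

variable {z : ℕ → ℤ}

lemma strictAnti (hz : IsDescentPath w d z) : StrictAnti z :=
  strictAnti_nat_of_succ_lt fun t => (hz t).1

lemma strictAnti_comp (hz : IsDescentPath w d z) : StrictAnti (w ∘ z) :=
  strictAnti_nat_of_succ_lt fun t => (hz t).2.1

lemma numbering_eq (hz : IsDescentPath w d z) (t : ℕ) : d (z t) = d (z 0) - t := by
  induction t with
  | zero => simp
  | succ t ih => rw [(hz t).2.2, ih]; push_cast; ring

lemma drop_le_drop_succ (hz : IsDescentPath w d z) (hd : IsProper w d)
    (hper : ∀ i, w (i + n) = w i + n) (t : ℕ) :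
    d (z t) - d (z t - n) ≤ d (z (t + 1)) - d (z (t + 1) - n) := by
  have hwsub := map_sub_of_periodic hper
  have := hd.1 (z (t + 1) - n) (z t - n) (by linarith [(hz t).1])
    (by rw [hwsub, hwsub]; linarith [(hz t).2.1])
  linarith [(hz t).2.2]

lemma drop_eq (hz : IsDescentPath w d z) (hd : IsProper w d) (hper : ∀ i, w (i + n) = w i + n)
    {Δ : ℤ} (hΔ : ∀ y, d y - d (y - n) ≤ Δ) (h₀ : d (z 0) - d (z 0 - n) = Δ) (t : ℕ) :
    d (z t) - d (z t - n) = Δ := by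
  induction t with
  | zero => exact h₀
  | succ t ih => linarith [hz.drop_le_drop_succ hd hper t, hΔ (z (t + 1))]

end IsDescentPath

/-- The path of length `n` from `y` ends weakly northwest of `y - n`. -/
lemma IsProper.drop_le (hd : IsProper w d) (hinj : Injective w)
    (hper : ∀ i, w (i + n) = w i + n) (y : ℤ) : d y - d (y - n) ≤ n := by
  obtain ⟨z, rfl, hz⟩ := hd.exists_descentPath hinj y
  have hrow := add_le_of_strictAnti hz.strictAnti 0 n
  have hcol := add_le_of_strictAnti hz.strictAnti_comp 0 n
  simp only [zero_add, comp_apply] at hrow hcol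
  have := hd.le_of_le_of_le hinj (a := z n) (b := z 0 - n) (by linarith)
    (by rw [map_sub_of_periodic hper]; linarith)
  linarith [hz.numbering_eq n]

lemma IsDescentPath.false_of_width_lt_drop {m Δ : ℕ} {z : ℕ → ℤ}
    (hz : IsDescentPath w d z) (hn : 0 < n) (hinj : Injective w)
    (hper : ∀ i, w (i + n) = w i + n) (hm : ∀ A, IsShiAntichain n w A → A.card ≤ m)
    (hd : IsProper w d) (hmΔ : m < Δ) (hΔ : ∀ y, d y - d (y - n) ≤ Δ)
    (hzΔ : ∀ t, d (z t) - d (z t - n) = Δ) : False := by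
  have hwsub := map_sub_of_periodic hper
  have hlevel : ∀ t, d (z (t + Δ)) = d (z t - n) := fun t => by
    have := hz.numbering_eq (t + Δ)
    push_cast at this
    linarith [hz.numbering_eq t, hzΔ t]
  have hexcl_row : ∀ t, z (t + Δ) + n < z t → w (z t) < w (z (t + Δ)) + n := by
    intro t ht
    by_contra! hw
    exact (hd.lt_of_le_of_le_of_ne hinj (b := z t - n) (by linarith) (by rw [hwsub]; linarith)
      (by linarith)).ne (hlevel t)
  have hexcl_col : ∀ t, w (z (t + Δ)) + n < w (z t) → z t < z (t + Δ) + n := by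
    intro t ht
    by_contra! hr
    exact (hd.lt_of_le_of_le_of_ne hinj (b := z t - n) (by linarith) (by rw [hwsub]; linarith)
      (fun h => by rw [h, hwsub] at ht; linarith)).ne (hlevel t)
  obtain ⟨t, t', K, htt', hK, hzK⟩ := exists_lt_eq_sub_mul hz.strictAnti hn
  have hwzK : w (z t') = w (z t) - K * n := by rw [hzK, map_sub_mul_of_periodic hper]
  have hKΔ : t' ≤ t + K * Δ := by
    have := le_sub_mul_add_mul hΔ (z t) K
    rw [← hzK, hz.numbering_eq t, hz.numbering_eq t'] at this
    exact_mod_cast (by linarith : (t' : ℤ) ≤ t + K * Δ)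
  have hK' : (1 : ℤ) ≤ K := by exact_mod_cast hK
  rcases forall_slow_or_forall_slow hz.strictAnti hz.strictAnti_comp hmΔ
    (spread_of_strictAnti hn hper hm hz.strictAnti hz.strictAnti_comp) hexcl_row hexcl_col
    with hslow | hslow
  · have := add_le_add_mul_of_slow hz.strictAnti_comp.antitone hslow hKΔ
    simp only [comp_apply] at this
    linarith
  · linarith [add_le_add_mul_of_slow hz.strictAnti.antitone hslow hKΔ]

end Proper

theorem stmt4 (n : ℕ) (hn : 0 < n) (w : ℤ → ℤ)
    (hbij : Function.Bijective w) (hper : ∀ i : ℤ, w (i + n) = w i + n)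
    (m : ℕ) (hm : IsShiWidth n w m)
    (d : ℤ → ℤ) (hd : IsProper w d) :
    ∀ i : ℤ, d i - m ≤ d (i - n) := by
  intro i
  by_contra! hi
  have hinj := hbij.injective
  obtain ⟨Δ, ⟨x, hx⟩, hmax⟩ := Int.exists_greatest_of_bdd
    (P := fun k => ∃ y, d y - d (y - n) = k)
    ⟨n, fun _ ⟨y, hy⟩ => hy ▸ hd.drop_le hinj hper y⟩ ⟨_, i, rfl⟩
  have hmΔ : (m : ℤ) < Δ := by linarith [hmax _ ⟨i, rfl⟩]
  lift Δ to ℕ using by omega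
  have hΔ : ∀ y, d y - d (y - n) ≤ Δ := fun y => hmax _ ⟨y, rfl⟩
  obtain ⟨z, rfl, hz⟩ := hd.exists_descentPath hinj x
  exact hz.false_of_width_lt_drop hn hinj hper hm.2 hd (by exact_mod_cast hmΔ) hΔ
    (hz.drop_eq hd hper hΔ hx)
end

section
/- The southwest partial ordering on the set of channels of an extended affine permutation w has a least element and a greatest element. Concretely, for any two channels C₁, C₂, the set of southwest-most elements of C₁ ∪ C₂ (elements b such that no b' ∈ C₁ ∪ C₂ is strictly northeast of b within the union's comparison) forms a channel, and similarly for the northeast-most elements; iterating, there is a channel southwest of all channels and a channel northeast of all channels. -/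
/-!
Given channels `C₁` and `C₂`, orient the incomparability relation on the balls of `C₁ ∪ C₂`
(strictly northeast, or strictly southwest) and keep the undominated balls `R`; they form a chain.
The dominated balls together with `C₁ ∩ C₂` form a chain `E` as well, because the union of two
chains contains no three pairwise incomparable balls. Counting rows `1, …, n` gives
`|R| + |E| = |C₁| + |C₂|`, and `|E| ≤ |C₁|` then makes `R` of maximal density.

A ball comparable with every ball of a channel lies on it (else its orbit could be added), so a
ball with no ball of a channel strictly southwest of it has one weakly northeast of it. Hence the
new channels bound `C₁` and `C₂` in the southwest order; as there are finitely many channels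
(each is determined by its rows `1, …, n`), the extreme channels exist.
-/

open Set Function

def Northeast (w : ℤ → ℤ) (i j : ℤ) : Prop := i < j ∧ w j < w i

def Incomparable (w : ℤ → ℤ) (i j : ℤ) : Prop := Northeast w i j ∨ Northeast w j i

section Channels

variable {n : ℕ} {w : ℤ → ℤ}

theorem Northeast.trans {a b c : ℤ} (hab : Northeast w a b) (hbc : Northeast w b c) :
    Northeast w a c :=
  ⟨hab.1.trans hbc.1, hbc.2.trans hab.2⟩

theorem northeast_add_iff (hper : ∀ i : ℤ, w (i + n) = w i + n) (i j : ℤ) :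
    Northeast w (i + n) (j + n) ↔ Northeast w i j := by
  simp only [Northeast, hper, add_lt_add_iff_right]

theorem map_add_mul (hper : ∀ i : ℤ, w (i + n) = w i + n) (i k : ℤ) :
    w (i + k * n) = w i + k * n := by
  have hP : Periodic (fun i => w i - i) (n : ℤ) := fun i => by simp only [hper]; ring
  have := hP.int_mul k i
  simp only [Int.cast_id] at this
  linarith

theorem mem_add_mul_iff {C : Set ℤ} (hC : ∀ i : ℤ, i ∈ C ↔ i + n ∈ C) (i k : ℤ) :
    i + k * n ∈ C ↔ i ∈ C := by
  have hP : Periodic (· ∈ C) (n : ℤ) := fun i => propext (hC i).symm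
  exact Iff.of_eq (hP.int_mul k i)

theorem existsUnique_add_mul_mem_Icc (hn : 0 < n) (a : ℤ) :
    ∃! k : ℤ, a + k * n ∈ Icc (1 : ℤ) n := by
  have hIcc : Icc (1 : ℤ) n = Ico 1 (1 + (n : ℤ)) := by ext; simp only [mem_Icc, mem_Ico]; omega
  simpa only [hIcc, smul_eq_mul] using existsUnique_add_zsmul_mem_Ico (by omega : (0 : ℤ) < n) a 1

theorem IsChannelChain.not_incomparable {C : Set ℤ} (hC : IsChannelChain n w C) {i j : ℤ}
    (hi : i ∈ C) (hj : j ∈ C) : ¬Incomparable w i j := by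
  rintro (⟨hij, hw⟩ | ⟨hji, hw⟩)
  · exact (hC.2 i hi j hj hij).not_gt hw
  · exact (hC.2 j hj i hi hji).not_gt hw

theorem not_incomparable_of_mem_inter {C₁ C₂ : Set ℤ} (h₁ : IsChannelChain n w C₁)
    (h₂ : IsChannelChain n w C₂) {i j : ℤ} (hi : i ∈ C₁ ∩ C₂) (hj : j ∈ C₁ ∪ C₂) :
    ¬Incomparable w i j := by
  rcases hj with hj | hj
  · exact h₁.not_incomparable hi.1 hj
  · exact h₂.not_incomparable hi.2 hj

/-- Pigeonhole: two of the three balls lie in the same chain. -/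
theorem not_incomparable_triple {C₁ C₂ : Set ℤ} (h₁ : IsChannelChain n w C₁)
    (h₂ : IsChannelChain n w C₂) {a b c : ℤ} (ha : a ∈ C₁ ∪ C₂) (hb : b ∈ C₁ ∪ C₂)
    (hc : c ∈ C₁ ∪ C₂) (hab : Incomparable w a b) (hbc : Incomparable w b c)
    (hac : Incomparable w a c) : False := by
  rcases ha with ha | ha <;> rcases hb with hb | hb <;> rcases hc with hc | hc <;>
    first
      | exact h₁.not_incomparable ha hb hab
      | exact h₂.not_incomparable ha hb hab
      | exact h₁.not_incomparable hb hc hbc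
      | exact h₂.not_incomparable hb hc hbc
      | exact h₁.not_incomparable ha hc hac
      | exact h₂.not_incomparable ha hc hac

theorem lt_of_not_incomparable (hinj : Injective w) {i j : ℤ} (h : ¬Incomparable w i j)
    (hij : i < j) : w i < w j :=
  (lt_or_gt_of_ne (hinj.ne hij.ne)).resolve_right fun hw => h (Or.inl ⟨hij, hw⟩)

theorem chDensity_add_chDensity {R E C₁ C₂ : Set ℤ} (hunion : R ∪ E = C₁ ∪ C₂)
    (hinter : R ∩ E = C₁ ∩ C₂) :
    chDensity n R + chDensity n E = chDensity n C₁ + chDensity n C₂ := by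
  have hfin (S : Set ℤ) : (S ∩ Icc (1 : ℤ) n).Finite := (finite_Icc _ _).inter_of_right S
  simp only [chDensity]
  rw [← ncard_union_add_ncard_inter _ _ (hfin R) (hfin E),
    ← ncard_union_add_ncard_inter _ _ (hfin C₁) (hfin C₂), ← union_inter_distrib_right,
    ← union_inter_distrib_right, ← inter_inter_distrib_right, ← inter_inter_distrib_right,
    hunion, hinter]

theorem isChannel_of_union_eq_of_inter_eq {R E C₁ C₂ : Set ℤ} (h₁ : IsChannel n w C₁)
    (h₂ : IsChannel n w C₂) (hR : IsChannelChain n w R) (hE : IsChannelChain n w E)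
    (hunion : R ∪ E = C₁ ∪ C₂) (hinter : R ∩ E = C₁ ∩ C₂) : IsChannel n w R := by
  refine ⟨hR, fun D hD => (h₂.2 D hD).trans ?_⟩
  have := chDensity_add_chDensity (n := n) hunion hinter
  have := h₁.2 E hE
  omega

theorem chDensity_union_orbit (hn : 0 < n) {X : Set ℤ} (hX : ∀ i : ℤ, i ∈ X ↔ i + n ∈ X)
    {a : ℤ} (ha : a ∉ X) : chDensity n (X ∪ {j | ∃ k : ℤ, j = a + k * n}) = chDensity n X + 1 := by
  obtain ⟨k₀, hk₀, huniq⟩ := existsUnique_add_mul_mem_Icc hn a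
  have hwindow : (X ∪ {j | ∃ k : ℤ, j = a + k * n}) ∩ Icc (1 : ℤ) n
      = insert (a + k₀ * n) (X ∩ Icc (1 : ℤ) n) := by
    ext j
    constructor
    · rintro ⟨hj | ⟨k, rfl⟩, hjI⟩
      · exact Or.inr ⟨hj, hjI⟩
      · exact Or.inl (by rw [huniq k hjI])
    · rintro (rfl | ⟨hj, hjI⟩)
      · exact ⟨Or.inr ⟨k₀, rfl⟩, hk₀⟩
      · exact ⟨Or.inl hj, hjI⟩
  rw [chDensity, hwindow, ncard_insert_of_notMem (fun h => ha ((mem_add_mul_iff hX a k₀).1 h.1))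
    ((finite_Icc _ _).inter_of_right X)]
  rfl

theorem IsChannel.mem_of_comparable (hn : 0 < n) (hper : ∀ i : ℤ, w (i + n) = w i + n)
    {X : Set ℤ} (hX : IsChannel n w X) {a : ℤ} (hlt : ∀ c ∈ X, c < a → w c < w a)
    (hgt : ∀ c ∈ X, a < c → w a < w c) : a ∈ X := by
  by_contra ha
  have horbit : ∀ j : ℤ, (∃ k : ℤ, j = a + k * n) ↔ ∃ k : ℤ, j + n = a + k * n :=
    fun j => ⟨fun ⟨k, hk⟩ => ⟨k + 1, by rw [hk]; ring⟩,
      fun ⟨k, hk⟩ => ⟨k - 1, by linear_combination hk⟩⟩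
  have hchain : IsChannelChain n w (X ∪ {j | ∃ k : ℤ, j = a + k * n}) := by
    refine ⟨fun i => or_congr (hX.1.1 i) (horbit i), ?_⟩
    rintro i (hi | ⟨k, rfl⟩) j (hj | ⟨l, rfl⟩) hij
    · exact hX.1.2 i hi j hj hij
    · have := hlt _ ((mem_add_mul_iff hX.1.1 i (-l)).2 hi) (by linarith)
      have := map_add_mul hper i (-l)
      rw [map_add_mul hper]
      linarith
    · have := hgt _ ((mem_add_mul_iff hX.1.1 j (-k)).2 hj) (by linarith)
      have := map_add_mul hper j (-k)
      rw [map_add_mul hper]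
      linarith
    · rw [map_add_mul hper, map_add_mul hper]
      linarith
  have := hX.2 _ hchain
  rw [chDensity_union_orbit hn hX.1.1 ha] at this
  omega

theorem IsChannel.exists_weakly_northeast (hn : 0 < n) (hinj : Injective w)
    (hper : ∀ i : ℤ, w (i + n) = w i + n) {X : Set ℤ} (hX : IsChannel n w X) {u : ℤ}
    (hu : ∀ c ∈ X, ¬Northeast w u c) : ∃ j ∈ X, j ≤ u ∧ w u ≤ w j := by
  by_contra! h
  have huX : u ∈ X := by
    refine hX.mem_of_comparable hn hper (fun c hc hcu => h c hc hcu.le) fun c hc huc => ?_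
    exact (lt_or_gt_of_ne (hinj.ne huc.ne)).resolve_right fun hw => hu c hc ⟨huc, hw⟩
  exact (h u huX le_rfl).false

theorem exists_isChannel (n : ℕ) (w : ℤ → ℤ) : ∃ C : Set ℤ, IsChannel n w C := by
  have hempty : IsChannelChain n w ∅ := ⟨fun _ => Iff.rfl, fun _ h => h.elim⟩
  set K : Set ℕ := {k | ∃ D : Set ℤ, IsChannelChain n w D ∧ chDensity n D = k}
  have hbdd : BddAbove K := ⟨(Icc (1 : ℤ) n).ncard, by
    rintro _ ⟨D, -, rfl⟩
    exact ncard_le_ncard inter_subset_right (finite_Icc _ _)⟩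
  obtain ⟨C, hC, hCK⟩ := Nat.sSup_mem (⟨_, ∅, hempty, rfl⟩ : K.Nonempty) hbdd
  exact ⟨C, hC, fun D hD => hCK ▸ le_csSup hbdd ⟨D, hD, rfl⟩⟩

theorem finite_setOf_isChannel (hn : 0 < n) (w : ℤ → ℤ) :
    {C : Set ℤ | IsChannel n w C}.Finite := by
  refine Finite.of_finite_image (f := (· ∩ Icc (1 : ℤ) n))
    ((finite_Icc _ _).finite_subsets.subset (by rintro _ ⟨C, -, rfl⟩; exact inter_subset_right))
    fun C hC D hD hCD => ?_
  ext i
  obtain ⟨k, hk, -⟩ := existsUnique_add_mul_mem_Icc hn i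
  have := congrArg (i + k * n ∈ ·) hCD
  simpa [hk, mem_add_mul_iff hC.1.1, mem_add_mul_iff hD.1.1] using this

/-- The two orientations `r` of incomparability give the southwest-most and the northeast-most
balls of `C₁ ∪ C₂`. -/
theorem isChannel_setOf_not_exists {r : ℤ → ℤ → Prop}
    (hr_add : ∀ i j : ℤ, r (i + n) (j + n) ↔ r i j)
    (hr_trans : ∀ a b c : ℤ, r a b → r b c → r a c)
    (hr_incomp : ∀ i j : ℤ, r i j ∨ r j i ↔ Incomparable w i j) (hinj : Injective w)
    {C₁ C₂ : Set ℤ} (h₁ : IsChannel n w C₁) (h₂ : IsChannel n w C₂) :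
    IsChannel n w {i ∈ C₁ ∪ C₂ | ¬∃ j ∈ C₁ ∪ C₂, r j i} := by
  set U := C₁ ∪ C₂
  set R := {i ∈ U | ¬∃ j ∈ U, r j i}
  set E := (U \ R) ∪ (C₁ ∩ C₂)
  have hU : ∀ i : ℤ, i ∈ U ↔ i + n ∈ U := fun i => or_congr (h₁.1.1 i) (h₂.1.1 i)
  have hR : ∀ i : ℤ, i ∈ R ↔ i + n ∈ R := fun i =>
    and_congr (hU i) <| not_congr
      ⟨fun ⟨j, hj, hji⟩ => ⟨j + n, (hU j).1 hj, (hr_add j i).2 hji⟩,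
        fun ⟨j, hj, hji⟩ => ⟨j - n, (hU _).2 (by simpa using hj),
          (hr_add _ i).1 (by simpa using hji)⟩⟩
  have hinter : C₁ ∩ C₂ ⊆ R := fun i hi => ⟨Or.inl hi.1, fun ⟨j, hj, hji⟩ =>
    not_incomparable_of_mem_inter h₁.1 h₂.1 hi hj ((hr_incomp i j).1 (Or.inr hji))⟩
  have hE_not_r : ∀ x ∈ E, ∀ y ∈ U, ¬r x y := by
    rintro x (⟨hx, hxR⟩ | hx) y hy hxy
    · obtain ⟨z, hz, hzx⟩ : ∃ z ∈ U, r z x := by_contra fun h => hxR ⟨hx, h⟩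
      exact not_incomparable_triple h₁.1 h₂.1 hz hx hy ((hr_incomp z x).1 (Or.inl hzx))
        ((hr_incomp x y).1 (Or.inl hxy)) ((hr_incomp z y).1 (Or.inl (hr_trans z x y hzx hxy)))
    · exact not_incomparable_of_mem_inter h₁.1 h₂.1 hx hy ((hr_incomp x y).1 (Or.inl hxy))
  have hEU : E ⊆ U := union_subset sdiff_subset fun i hi => Or.inl hi.1
  have hRchain : IsChannelChain n w R := ⟨hR, fun i hi j hj => lt_of_not_incomparable hinj
    fun hij => ((hr_incomp i j).2 hij).elim (fun h => hj.2 ⟨i, hi.1, h⟩)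
      fun h => hi.2 ⟨j, hj.1, h⟩⟩
  have hEchain : IsChannelChain n w E := ⟨fun i => or_congr
    (and_congr (hU i) (not_congr (hR i))) (and_congr (h₁.1.1 i) (h₂.1.1 i)),
    fun i hi j hj => lt_of_not_incomparable hinj fun hij => ((hr_incomp i j).2 hij).elim
      (hE_not_r i hi j (hEU hj)) (hE_not_r j hj i (hEU hi))⟩
  refine isChannel_of_union_eq_of_inter_eq h₁ h₂ hRchain hEchain ?_ ?_
  · rw [← union_assoc, union_sdiff_self, union_eq_right.2 (sep_subset U _),
      union_eq_left.2 (hinter.trans (sep_subset U _))]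
  · rw [inter_union_distrib_left, inter_sdiff_self, empty_union]
    exact inter_eq_right.2 hinter

theorem ChannelSW.trans {A B C : Set ℤ} (hAB : ChannelSW n w A B) (hBC : ChannelSW n w B C) :
    ChannelSW n w A C := fun i hi =>
  let ⟨j, hj, hji, hwij⟩ := hAB i hi
  let ⟨k, hk, hkj, hwjk⟩ := hBC j hj
  ⟨k, hk, hkj.trans hji, hwij.trans hwjk⟩

theorem exists_isChannel_forall_of_directed (hn : 0 < n) (w : ℤ → ℤ)
    {rel : Set ℤ → Set ℤ → Prop} (htrans : ∀ A B C, rel A B → rel B C → rel A C)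
    (hdir : ∀ A B, IsChannel n w A → IsChannel n w B → ∃ C, IsChannel n w C ∧ rel A C ∧ rel B C) :
    ∃ C, IsChannel n w C ∧ ∀ C', IsChannel n w C' → rel C' C := by
  have : IsTrans (Set ℤ) rel := ⟨htrans⟩
  have : Finite {C | IsChannel n w C} := (finite_setOf_isChannel hn w).to_subtype
  obtain ⟨C₀, hC₀⟩ := exists_isChannel n w
  have : Nonempty {C | IsChannel n w C} := ⟨⟨C₀, hC₀⟩⟩
  have hD : Directed rel (Subtype.val : {C | IsChannel n w C} → Set ℤ) := fun A B =>
    let ⟨C, hC, hAC, hBC⟩ := hdir A B A.2 B.2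
    ⟨⟨C, hC⟩, hAC, hBC⟩
  obtain ⟨C, hC⟩ := hD.finite_le id
  exact ⟨C, C.2, fun C' hC' => hC ⟨C', hC'⟩⟩

end Channels

theorem stmt9 (n : ℕ) (hn : 0 < n) (w : ℤ → ℤ)
    (hbij : Function.Bijective w) (hper : ∀ i : ℤ, w (i + n) = w i + n) :
    (∀ C₁ C₂ : Set ℤ, IsChannel n w C₁ → IsChannel n w C₂ →
      IsChannel n w {i ∈ C₁ ∪ C₂ | ¬∃ j ∈ C₁ ∪ C₂, j < i ∧ w i < w j} ∧
      IsChannel n w {i ∈ C₁ ∪ C₂ | ¬∃ j ∈ C₁ ∪ C₂, i < j ∧ w j < w i}) ∧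
    (∃ C : Set ℤ, IsChannel n w C ∧
      ∀ C' : Set ℤ, IsChannel n w C' → ChannelSW n w C C') ∧
    (∃ C : Set ℤ, IsChannel n w C ∧
      ∀ C' : Set ℤ, IsChannel n w C' → ChannelSW n w C' C) := by
  have hinj := hbij.injective
  have hne_most {C₁ C₂ : Set ℤ} (h₁ : IsChannel n w C₁) (h₂ : IsChannel n w C₂) :=
    isChannel_setOf_not_exists (r := Northeast w) (northeast_add_iff hper)
      (fun _ _ _ => Northeast.trans) (fun _ _ => Iff.rfl) hinj h₁ h₂
  have hsw_most {C₁ C₂ : Set ℤ} (h₁ : IsChannel n w C₁) (h₂ : IsChannel n w C₂) :=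
    isChannel_setOf_not_exists (r := flip (Northeast w)) (fun i j => northeast_add_iff hper j i)
      (fun _ _ _ hab hbc => hbc.trans hab) (fun _ _ => or_comm) hinj h₁ h₂
  refine ⟨fun C₁ C₂ h₁ h₂ => ⟨hne_most h₁ h₂, hsw_most h₁ h₂⟩, ?_, ?_⟩
  · refine exists_isChannel_forall_of_directed hn w (rel := flip (ChannelSW n w))
      (fun _ _ _ hAB hBC => ChannelSW.trans hBC hAB) fun A B hA hB => ⟨_, hsw_most hA hB, ?_, ?_⟩
    · exact fun u hu => hA.exists_weakly_northeast hn hinj hper fun c hc hcu =>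
        hu.2 ⟨c, Or.inl hc, hcu⟩
    · exact fun u hu => hB.exists_weakly_northeast hn hinj hper fun c hc hcu =>
        hu.2 ⟨c, Or.inr hc, hcu⟩
  · refine exists_isChannel_forall_of_directed hn w (rel := ChannelSW n w)
      (fun _ _ _ => ChannelSW.trans) fun A B hA hB => ⟨_, hne_most hA hB, ?_, ?_⟩
    · exact fun u hu => (hne_most hA hB).exists_weakly_northeast hn hinj hper fun c hc hcu =>
        hc.2 ⟨u, Or.inl hu, hcu⟩
    · exact fun u hu => (hne_most hA hB).exists_weakly_northeast hn hinj hper fun c hc hcu =>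
        hc.2 ⟨u, Or.inr hu, hcu⟩
end

section
/- Let w be a partial extended affine permutation and S a compatible stream whose flow equals the width m of the Shi poset of w. Then the backward numbering d_w^{←,S} numbers every channel C of w by consecutive integers: consecutive elements of C (in southeast order) receive consecutive values, so d_w^{←,S}(C) = ℤ when C is infinite. -/
/-- The Shi relation for a partial extended affine permutation (domain `U`). -/
def ShiLeP (n : ℕ) (w : ℤ → ℤ) (i j : ℤ) : Prop :=
  i = j ∨ (j < i ∧ w i < w j) ∨ w i + n < w j

/-- An antichain of the Shi poset of the partial permutation `(U, w)`. -/
def IsShiAntichainP (n : ℕ) (U : Set ℤ) (w : ℤ → ℤ) (A : Finset ℤ) : Prop :=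
  A ⊆ Finset.Icc (1 : ℤ) n ∧ (↑A : Set ℤ) ⊆ U ∧
  ∀ i ∈ A, ∀ j ∈ A, i ≠ j → ¬ ShiLeP n w i j ∧ ¬ ShiLeP n w j i

/-- `m` is the width of the Shi poset of the partial permutation `(U, w)`. -/
def IsShiWidthP (n : ℕ) (U : Set ℤ) (w : ℤ → ℤ) (m : ℕ) : Prop :=
  (∃ A : Finset ℤ, IsShiAntichainP n U w A ∧ A.card = m) ∧
  ∀ A : Finset ℤ, IsShiAntichainP n U w A → A.card ≤ m

/-- `(U, w)` is a partial extended affine permutation. -/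
def IsPartialPerm (n : ℕ) (U : Set ℤ) (w : ℤ → ℤ) : Prop :=
  (∀ i : ℤ, i ∈ U ↔ i + n ∈ U) ∧
  (∀ i ∈ U, w (i + n) = w i + n) ∧
  (∀ i ∈ U, ∀ j ∈ U, w i = w j → i = j)

/-- `s` enumerates a stream of flow `f` by consecutive integers from northwest
to southeast (a proper numbering of the stream). -/
def IsStreamEnum (n : ℕ) (f : ℕ) (s : ℤ → ℤ × ℤ) : Prop :=
  (∀ t : ℤ, (s t).1 < (s (t + 1)).1 ∧ (s t).2 < (s (t + 1)).2) ∧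
  (∀ t : ℤ, s (t + f) = ((s t).1 + n, (s t).2 + n))

/-- The stream enumerated by `s` is compatible with the partial permutation:
no common rows or columns with the balls of `(U, w)`. -/
def StreamCompat (U : Set ℤ) (w : ℤ → ℤ) (s : ℤ → ℤ × ℤ) : Prop :=
  ∀ i ∈ U, ∀ t : ℤ, (s t).1 ≠ i ∧ (s t).2 ≠ w i

/-- Monotonicity of a numbering of the balls of a partial permutation. -/
def BMonotone (U : Set ℤ) (w : ℤ → ℤ) (d : ℤ → ℤ) : Prop :=
  ∀ i ∈ U, ∀ j ∈ U, i < j → w i < w j → d i < d j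

/-- `d₀` is the stream numbering: `d₀ b` is the largest `t` with `s t` weakly
northwest of the ball `b` (expressed using the monotone enumeration `s`). -/
def IsStreamNumbering (U : Set ℤ) (w : ℤ → ℤ) (s : ℤ → ℤ × ℤ) (d₀ : ℤ → ℤ) : Prop :=
  ∀ i ∈ U, ((s (d₀ i)).1 ≤ i ∧ (s (d₀ i)).2 ≤ w i) ∧
    ¬((s (d₀ i + 1)).1 ≤ i ∧ (s (d₀ i + 1)).2 ≤ w i)

/-- The backward numbering of `(U, w)` with respect to the stream `s`:
the largest monotone numbering `d` with `s (d b)` weakly northwest of `b`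
for every ball `b`. -/
def IsBackwardNumbering (U : Set ℤ) (w : ℤ → ℤ) (s : ℤ → ℤ × ℤ) (d : ℤ → ℤ) : Prop :=
  BMonotone U w d ∧
  (∀ i ∈ U, (s (d i)).1 ≤ i ∧ (s (d i)).2 ≤ w i) ∧
  ∀ d' : ℤ → ℤ, BMonotone U w d' →
    (∀ i ∈ U, (s (d' i)).1 ≤ i ∧ (s (d' i)).2 ≤ w i) →
    ∀ i ∈ U, d' i ≤ d i

/-- An `(n,n)`-invariant southeast chain of balls of the partial permutation. -/
def IsChannelChainP (n : ℕ) (U : Set ℤ) (w : ℤ → ℤ) (C : Set ℤ) : Prop :=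
  C ⊆ U ∧ (∀ i : ℤ, i ∈ C ↔ i + n ∈ C) ∧ ∀ i ∈ C, ∀ j ∈ C, i < j → w i < w j

/-- A channel of the partial permutation: such a chain of maximal density. -/
noncomputable def chDensityP (n : ℕ) (C : Set ℤ) : ℕ := (C ∩ Set.Icc (1 : ℤ) n).ncard

def IsChannelP (n : ℕ) (U : Set ℤ) (w : ℤ → ℤ) (C : Set ℤ) : Prop :=
  IsChannelChainP n U w C ∧
  ∀ D : Set ℤ, IsChannelChainP n U w D → chDensityP n D ≤ chDensityP n C

/-!
Comparing the backward numbering `d` with its translates by `±(n, m)` through its maximality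
shows `d (b + (n,n)) = d b + m`. Along a channel `C` the numbering is strictly increasing, and a
period window `C ∩ (i, i + n]` has exactly `m` elements (the density of `C`), all sent into
`(d i, d i + m]`; so the window is sent onto that interval. This forces consecutive elements
of `C` to get consecutive numbers and every integer to be attained.
-/

open Set

lemma IsStreamEnum.flow_pos {n f : ℕ} {s : ℤ → ℤ × ℤ} (hs : IsStreamEnum n f s) (hn : 0 < n) :
    0 < f := by
  refine Nat.pos_of_ne_zero fun hf => ?_
  have h := congrArg Prod.fst (hs.2 0)
  simp only [hf, Nat.cast_zero, add_zero] at h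
  omega

lemma BMonotone.strictMonoOn {n : ℕ} {U C : Set ℤ} {w d : ℤ → ℤ} (hd : BMonotone U w d)
    (hC : IsChannelChainP n U w C) : StrictMonoOn d C :=
  fun i hi j hj hij => hd i (hC.1 hi) j (hC.1 hj) hij (hC.2.2 i hi j hj hij)

section BackwardNumbering

variable {U : Set ℤ} {w : ℤ → ℤ} {s : ℤ → ℤ × ℤ} {d : ℤ → ℤ}

lemma IsBackwardNumbering.sub_le_of_shift (hd : IsBackwardNumbering U w s d) {a b : ℤ}
    (hU : ∀ i ∈ U, i + a ∈ U) (hw : ∀ i ∈ U, w (i + a) = w i + a)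
    (hs : ∀ t, s (t + b) = ((s t).1 + a, (s t).2 + a)) :
    ∀ i ∈ U, d (i + a) - b ≤ d i := by
  refine hd.2.2 (fun i => d (i + a) - b) (fun i hi j hj hij hwij => ?_) (fun i hi => ?_)
  · have := hd.1 (i + a) (hU i hi) (j + a) (hU j hj) (by omega) (by rw [hw i hi, hw j hj]; omega)
    simp only
    omega
  · have hNW := hd.2.1 (i + a) (hU i hi)
    rw [← sub_add_cancel (d (i + a)) b, hs, hw i hi] at hNW
    exact ⟨by simpa using hNW.1, by simpa using hNW.2⟩

lemma IsBackwardNumbering.add_period {n f : ℕ} (hd : IsBackwardNumbering U w s d)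
    (hpp : IsPartialPerm n U w) (hs : IsStreamEnum n f s) :
    ∀ i ∈ U, d (i + n) = d i + f := by
  obtain ⟨hUper, hwper, -⟩ := hpp
  have hUneg : ∀ i ∈ U, i + -(n : ℤ) ∈ U := fun i hi =>
    (hUper _).2 (by simpa using hi)
  have hwneg : ∀ i ∈ U, w (i + -(n : ℤ)) = w i + -(n : ℤ) := fun i hi => by
    have := hwper _ (hUneg i hi)
    simp only [neg_add_cancel_right] at this
    omega
  have hsneg : ∀ t, s (t + -(f : ℤ)) = ((s t).1 + -(n : ℤ), (s t).2 + -(n : ℤ)) := fun t => by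
    have := hs.2 (t + -(f : ℤ))
    simp only [neg_add_cancel_right] at this
    rw [this]
    simp
  intro i hi
  have hle := hd.sub_le_of_shift (fun i hi => (hUper i).1 hi) hwper hs.2 i hi
  have hge := hd.sub_le_of_shift hUneg hwneg hsneg (i + n) ((hUper i).1 hi)
  simp only [add_neg_cancel_right, sub_neg_eq_add] at hge
  omega

end BackwardNumbering

/-- `toIocMod` maps one window bijectively onto the other. -/
lemma ncard_inter_Ioc_eq_of_periodic {C : Set ℤ} {p : ℤ} (hp : 0 < p)
    (hC : Function.Periodic (· ∈ C) p) (a b : ℤ) :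
    (C ∩ Ioc a (a + p)).ncard = (C ∩ Ioc b (b + p)).ncard := by
  have hmem : ∀ c x, toIocMod hp c x ∈ C ↔ x ∈ C := fun c x => by
    rw [← sub_sub_cancel x (toIocMod hp c x), self_sub_toIocMod]
    exact iff_of_eq (hC.sub_zsmul_eq _)
  have hinv : ∀ c c' x, x ∈ Ioc c (c + p) → toIocMod hp c (toIocMod hp c' x) = x :=
    fun c c' x hx => by rw [toIocMod_toIocMod, toIocMod_eq_self]; exact hx
  refine Set.BijOn.ncard_eq (f := toIocMod hp b) (InvOn.bijOn (f' := toIocMod hp a)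
    ⟨fun x hx => hinv a b x hx.2, fun y hy => hinv b a y hy.2⟩ ?_ ?_)
  · exact fun x hx => ⟨(hmem b x).2 hx.1, toIocMod_mem_Ioc hp b x⟩
  · exact fun y hy => ⟨(hmem a y).2 hy.1, toIocMod_mem_Ioc hp a y⟩

lemma chDensityP_eq_ncard_inter_Ioc (n : ℕ) (C : Set ℤ) :
    chDensityP n C = (C ∩ Ioc 0 (0 + (n : ℤ))).ncard := by
  rw [chDensityP, ← Icc_add_one_left_eq_Ioc, zero_add, zero_add]

lemma StrictMonoOn.image_inter_Ioc_eq {C : Set ℤ} {d : ℤ → ℤ} (hd : StrictMonoOn d C)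
    {i j : ℤ} (hi : i ∈ C) (hj : j ∈ C) (hcard : ((C ∩ Ioc i j).ncard : ℤ) = d j - d i) :
    d '' (C ∩ Ioc i j) = Ioc (d i) (d j) := by
  have hsub : d '' (C ∩ Ioc i j) ⊆ Ioc (d i) (d j) := by
    rintro _ ⟨x, ⟨hxC, hix, hxj⟩, rfl⟩
    exact ⟨hd hi hxC hix, hd.monotoneOn hxC hj hxj⟩
  refine eq_of_subset_of_ncard_le hsub ?_
  have hij : d i ≤ d j := by
    have := (C ∩ Ioc i j).ncard.cast_nonneg (α := ℤ)
    omega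
  rw [(hd.injOn.mono inter_subset_left).ncard_image, ← Nat.cast_le (α := ℤ), hcard,
    ← Nat.card_coe_set_eq, Nat.card_eq_fintype_card, Int.card_fintype_Ioc_of_le _ _ hij]

lemma Int.mem_of_add_one_mem_of_sub_one_mem {S : Set ℤ} (hS : S.Nonempty)
    (h : ∀ y ∈ S, y + 1 ∈ S ∧ y - 1 ∈ S) (v : ℤ) : v ∈ S := by
  obtain ⟨y, hy⟩ := hS
  induction v using Int.inductionOn' (b := y) with
  | zero => exact hy
  | succ k _ hk => exact (h k hk).1
  | pred k _ hk => exact (h k hk).2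

section PeriodicChain

variable {n m : ℕ} {C : Set ℤ} {d : ℤ → ℤ}

lemma image_inter_Ioc_add_eq (hn : 0 < n) (hC : ∀ i, i ∈ C ↔ i + n ∈ C)
    (hd : StrictMonoOn d C) (hper : ∀ i ∈ C, d (i + n) = d i + m) (hdens : chDensityP n C = m)
    {i : ℤ} (hi : i ∈ C) : d '' (C ∩ Ioc i (i + n)) = Ioc (d i) (d i + m) := by
  have hCper : Function.Periodic (· ∈ C) (n : ℤ) := fun i => propext (hC i).symm
  rw [← hper i hi]
  refine hd.image_inter_Ioc_eq hi ((hC i).1 hi) ?_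
  rw [hper i hi, ncard_inter_Ioc_eq_of_periodic (by omega) hCper i 0,
    ← chDensityP_eq_ncard_inter_Ioc, hdens, add_sub_cancel_left]

lemma eq_add_one_of_forall_notMem_Ioo (hn : 0 < n) (hm : 0 < m) (hC : ∀ i, i ∈ C ↔ i + n ∈ C)
    (hd : StrictMonoOn d C) (hper : ∀ i ∈ C, d (i + n) = d i + m) (hdens : chDensityP n C = m)
    {i j : ℤ} (hi : i ∈ C) (hj : j ∈ C) (hij : i < j) (hgap : ∀ c ∈ C, ¬(i < c ∧ c < j)) :
    d j = d i + 1 := by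
  obtain ⟨c, ⟨hcC, hic, -⟩, hc⟩ : d i + 1 ∈ d '' (C ∩ Ioc i (i + n)) := by
    rw [image_inter_Ioc_add_eq hn hC hd hper hdens hi, mem_Ioc]
    omega
  have hjc : j ≤ c := not_lt.1 fun hcj => hgap c hcC ⟨hic, hcj⟩
  have := hd hi hj hij
  have := hd.monotoneOn hj hcC hjc
  omega

lemma surjOn_univ_of_add_period (hn : 0 < n) (hm : 0 < m) (hC : ∀ i, i ∈ C ↔ i + n ∈ C)
    (hd : StrictMonoOn d C) (hper : ∀ i ∈ C, d (i + n) = d i + m) (hdens : chDensityP n C = m) :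
    SurjOn d C univ := by
  refine fun v _ => Int.mem_of_add_one_mem_of_sub_one_mem (S := d '' C) ?_ ?_ v
  · obtain ⟨i, hi, -⟩ := nonempty_of_ncard_ne_zero (s := C ∩ Icc 1 (n : ℤ))
      (by rw [← chDensityP, hdens]; omega)
    exact ⟨d i, i, hi, rfl⟩
  rintro _ ⟨i, hi, rfl⟩
  have hi' : i - n ∈ C := (hC (i - n)).2 (by rwa [sub_add_cancel])
  have hprev := hper _ hi'
  rw [sub_add_cancel] at hprev
  have hsub : ∀ j ∈ C, Ioc (d j) (d j + m) ⊆ d '' C := fun j hj => by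
    rw [← image_inter_Ioc_add_eq hn hC hd hper hdens hj]
    exact image_mono inter_subset_left
  refine ⟨hsub i hi ⟨by omega, by omega⟩, ?_⟩
  by_cases hm1 : m = 1
  · exact ⟨i - n, hi', by omega⟩
  · exact hsub _ hi' ⟨by omega, by omega⟩

end PeriodicChain

theorem stmt14_general (n : ℕ) (hn : 0 < n) (U : Set ℤ) (w : ℤ → ℤ)
    (hpp : IsPartialPerm n U w)
    (m : ℕ)
    (s : ℤ → ℤ × ℤ) (hs : IsStreamEnum n m s)
    (d : ℤ → ℤ) (hd : IsBackwardNumbering U w s d)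
    (C : Set ℤ) (hC : IsChannelP n U w C) (hCm : chDensityP n C = m) :
    (∀ i ∈ C, ∀ j ∈ C, i < j → (∀ c ∈ C, ¬(i < c ∧ c < j)) → d j = d i + 1) ∧
    (∀ v : ℤ, ∃ i ∈ C, d i = v) := by
  obtain ⟨hchain, -⟩ := hC
  have hmono : StrictMonoOn d C := hd.1.strictMonoOn hchain
  have hper : ∀ i ∈ C, d (i + n) = d i + m := fun i hi => hd.add_period hpp hs i (hchain.1 hi)
  have hm : 0 < m := hs.flow_pos hn
  exact ⟨fun i hi j hj hij hgap => eq_add_one_of_forall_notMem_Ioo hn hm hchain.2.1 hmono hper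
      hCm hi hj hij hgap,
    fun v => surjOn_univ_of_add_period hn hm hchain.2.1 hmono hper hCm (mem_univ v)⟩

theorem stmt14 (n : ℕ) (hn : 0 < n) (U : Set ℤ) (w : ℤ → ℤ)
    (hpp : IsPartialPerm n U w)
    (m : ℕ) (hm : IsShiWidthP n U w m)
    (s : ℤ → ℤ × ℤ) (hs : IsStreamEnum n m s) (hcompat : StreamCompat U w s)
    (d : ℤ → ℤ) (hd : IsBackwardNumbering U w s d)
    (C : Set ℤ) (hC : IsChannelP n U w C) (hCm : chDensityP n C = m) :
    (∀ i ∈ C, ∀ j ∈ C, i < j → (∀ c ∈ C, ¬(i < c ∧ c < j)) → d j = d i + 1) ∧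
    (∀ v : ℤ, ∃ i ∈ C, d i = v) :=
  stmt14_general n hn U w hpp m s hs d hd C hC hCm
end

section
/- Backward numbering via reverse paths: let w be a partial extended affine permutation, S a compatible stream with fixed proper numbering, d = d_w^{←,S} the backward numbering, and d₀ the stream numbering d₀(b) = max{ f(s) : s ∈ S northwest of b }. Then for every ball b, d(b) = min over all reverse paths (b = b₀, b₁, …, b_k) (each step strictly southeast) of d₀(b_k) − k. -/
theorem stmt15 (n : ℕ) (hn : 0 < n) (U : Set ℤ) (w : ℤ → ℤ)
    (hpp : IsPartialPerm n U w)
    (m : ℕ) (hm : IsShiWidthP n U w m)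
    (f : ℕ) (hf : m ≤ f)
    (s : ℤ → ℤ × ℤ) (hs : IsStreamEnum n f s) (hcompat : StreamCompat U w s)
    (d₀ : ℤ → ℤ) (hd₀ : IsStreamNumbering U w s d₀)
    (d : ℤ → ℤ) (hd : IsBackwardNumbering U w s d) :
    ∀ i ∈ U, IsLeast {v : ℤ | ∃ (k : ℕ) (q : ℕ → ℤ), q 0 = i ∧
      (∀ l ≤ k, q l ∈ U) ∧
      (∀ l, l < k → q l < q (l + 1) ∧ w (q l) < w (q (l + 1))) ∧
      v = d₀ (q k) - k} (d i) := by
  classical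
  obtain ⟨hmon, hNW, hmax⟩ := hd
  set P : ℤ → ℤ → Prop := fun i v => ∃ (k : ℕ) (q : ℕ → ℤ), q 0 = i ∧
      (∀ l ≤ k, q l ∈ U) ∧
      (∀ l, l < k → q l < q (l + 1) ∧ w (q l) < w (q (l + 1))) ∧
      v = d₀ (q k) - k with hP
  have smono1 : StrictMono fun t => (s t).1 :=
    strictMono_int_of_lt_succ fun t => (hs.1 t).1
  have smono2 : StrictMono fun t => (s t).2 :=
    strictMono_int_of_lt_succ fun t => (hs.1 t).2
  have hdle : ∀ i ∈ U, d i ≤ d₀ i := by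
    intro i hi
    by_contra h
    push_neg at h
    have h1 : d₀ i + 1 ≤ d i := h
    exact (hd₀ i hi).2 ⟨le_trans (smono1.monotone h1) (hNW i hi).1,
      le_trans (smono2.monotone h1) (hNW i hi).2⟩
  -- lower bound
  have lb : ∀ i ∈ U, ∀ v, P i v → d i ≤ v := by
    intro i hi v hv
    obtain ⟨k, q, hq0, hqU, hstep, hv⟩ := hv
    have claim : ∀ p : ℕ, p ≤ k → d i + p ≤ d (q p) := by
      intro p
      induction p with
      | zero => intro _; simp [hq0]
      | succ p ih =>
        intro hpk
        have hp : p ≤ k := le_of_lt (Nat.lt_of_succ_le hpk)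
        have h1 := ih hp
        have h2 := hstep p (Nat.lt_of_succ_le hpk)
        have h3 := hmon (q p) (hqU p hp) (q (p+1)) (hqU (p+1) hpk) h2.1 h2.2
        push_cast
        push_cast at h1
        omega
    have h4 := claim k le_rfl
    have h5 := hdle (q k) (hqU k le_rfl)
    omega
  -- trivial path
  have triv : ∀ i ∈ U, P i (d₀ i) := by
    intro i hi
    exact ⟨0, fun _ => i, rfl, fun l _ => hi, fun l hl => absurd hl (Nat.not_lt_zero l),
      by simp⟩
  have hleast : ∀ i, i ∈ U → ∃ v, P i v ∧ ∀ v', P i v' → v ≤ v' := by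
    intro i hi
    exact Int.exists_least_of_bdd ⟨d i, fun z hz => lb i hi z hz⟩ ⟨d₀ i, triv i hi⟩
  choose g hg1 hg2 using hleast
  set d' : ℤ → ℤ := fun j => if h : j ∈ U then g j h else d j with hd'
  have hd'eq : ∀ i (hi : i ∈ U), d' i = g i hi := by
    intro i hi; simp [hd', hi]
  have hd'le : ∀ i (hi : i ∈ U), d' i ≤ d₀ i := by
    intro i hi
    rw [hd'eq i hi]
    exact hg2 i hi _ (triv i hi)
  have hd'mon : BMonotone U w d' := by
    intro i hi j hj hij hwij
    rw [hd'eq i hi, hd'eq j hj]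
    obtain ⟨k, q, hq0, hqU, hstep, hv⟩ := hg1 j hj
    have hle : g i hi ≤ g j hj - 1 := by
      apply hg2 i hi
      refine ⟨k + 1, fun l => Nat.rec i (fun m _ => q m) l, rfl, ?_, ?_, ?_⟩
      · intro l hl
        cases l with
        | zero => exact hi
        | succ p => exact hqU p (Nat.le_of_succ_le_succ hl)
      · intro l hl
        cases l with
        | zero => simpa [hq0] using ⟨hij, hwij⟩
        | succ p => exact hstep p (Nat.lt_of_succ_lt_succ hl)
      · show g j hj - 1 = d₀ (q k) - (↑(k + 1))
        push_cast
        omega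
    omega
  have hd'NW : ∀ i ∈ U, (s (d' i)).1 ≤ i ∧ (s (d' i)).2 ≤ w i := by
    intro i hi
    have h1 := hd'le i hi
    exact ⟨le_trans (smono1.monotone h1) (hd₀ i hi).1.1,
      le_trans (smono2.monotone h1) (hd₀ i hi).1.2⟩
  intro i hi
  have h6 : d' i ≤ d i := hmax d' hd'mon hd'NW i hi
  have h7 : d i ≤ g i hi := lb i hi _ (hg1 i hi)
  have h8 : d i = g i hi := by rw [hd'eq i hi] at h6; omega
  constructor
  · show P i (d i)
    rw [h8]; exact hg1 i hi
  · intro v hv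
    exact lb i hi v hv
end

section
/- For an extended affine permutation w arising from a finite permutation (w(i) ∈ {1,…,n} for 1 ≤ i ≤ n, extended by w(i+n) = w(i)+n), the matrix of w is block diagonal with n×n blocks, and w has a unique proper numbering up to an overall additive shift; this numbering restricted to the block {1,…,n} × {1,…,n} coincides (up to shift) with the Matrix-Ball Construction numbering: d(b) = 1 + (length of the longest path of balls strictly northwest of b within the same block ending at b, counted appropriately), i.e. d((i,w(i)) + k(n,n)) = d_MBC(i, w(i)) + k·m where m is the width of the Shi poset. -/
open Finset Function

theorem map_add_mul_of_map_add {w : ℤ → ℤ} {p : ℤ} (hper : ∀ i, w (i + p) = w i + p)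
    (i k : ℤ) : w (i + k * p) = w i + k * p := by
  simpa using AddConstMapClass.map_add_zsmul (⟨w, hper⟩ : AddConstMap ℤ ℤ p p) i k

section Blocks

variable {n : ℕ}

theorem exists_mem_Icc_eq_add_mul (hn : 0 < n) (j : ℤ) :
    ∃ i ∈ Icc (1 : ℤ) n, ∃ k : ℤ, j = i + k * n := by
  have hp : (0 : ℤ) < n := by exact_mod_cast hn
  have hmem := toIcoMod_mem_Ico hp 1 j
  rw [Set.mem_Ico] at hmem
  refine ⟨toIcoMod hp 1 j, mem_Icc.2 ⟨hmem.1, by omega⟩, toIcoDiv hp 1 j, ?_⟩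
  simpa using (toIcoMod_add_toIcoDiv_zsmul hp 1 j).symm

theorem add_mul_lt_add_mul_s18 {i j k l : ℤ} (hi : i ∈ Icc (1 : ℤ) n) (hj : j ∈ Icc (1 : ℤ) n)
    (hkl : k < l) : i + k * n < j + l * n := by
  rw [mem_Icc] at hi hj
  nlinarith

theorem le_of_add_mul_le_add_mul {i j k l : ℤ} (hi : i ∈ Icc (1 : ℤ) n)
    (hj : j ∈ Icc (1 : ℤ) n) (h : i + k * n ≤ j + l * n) : k ≤ l := by
  by_contra! hlk
  exact (add_mul_lt_add_mul_s18 hj hi hlk).not_ge h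

variable {w : ℤ → ℤ}

theorem nw_of_lt_of_mem_Icc (hper : ∀ i : ℤ, w (i + n) = w i + n)
    (hfin : ∀ i ∈ Icc (1 : ℤ) n, w i ∈ Icc (1 : ℤ) n) {i j k l : ℤ}
    (hi : i ∈ Icc (1 : ℤ) n) (hj : j ∈ Icc (1 : ℤ) n) (hkl : k < l) :
    i + k * n < j + l * n ∧ w (i + k * n) < w (j + l * n) := by
  refine ⟨add_mul_lt_add_mul_s18 hi hj hkl, ?_⟩
  rw [map_add_mul_of_map_add hper, map_add_mul_of_map_add hper]
  exact add_mul_lt_add_mul_s18 (hfin i hi) (hfin j hj) hkl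

end Blocks

def IsNWChain (w : ℤ → ℤ) (A : Finset ℤ) : Prop :=
  ∀ i ∈ A, ∀ j ∈ A, i < j → w i < w j

theorem isShiAntichain_iff {n : ℕ} {w : ℤ → ℤ} (hinj : Injective w)
    (hfin : ∀ i ∈ Icc (1 : ℤ) n, w i ∈ Icc (1 : ℤ) n) {A : Finset ℤ} :
    IsShiAntichain n w A ↔ A ⊆ Icc (1 : ℤ) n ∧ IsNWChain w A := by
  refine ⟨fun h => ⟨h.1, fun i hi j hj hij => ?_⟩, fun h => ⟨h.1, fun i hi j hj hij => ?_⟩⟩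
  · have hw : w i ≠ w j := hinj.ne hij.ne
    have := (h.2 i hi j hj hij.ne).2
    simp only [ShiLe, not_or, not_and] at this
    exact lt_of_le_of_ne (not_lt.1 (this.2.1 hij)) hw
  · have hwi := mem_Icc.1 (hfin i (h.1 hi))
    have hwj := mem_Icc.1 (hfin j (h.1 hj))
    have hlt := h.2 i hi j hj
    have hgt := h.2 j hj i hi
    simp only [ShiLe]
    rcases lt_or_gt_of_ne hij with hij | hij
    · have := hlt hij; omega
    · have := hgt hij; omega

def mbcChainLengths (n : ℕ) (w : ℤ → ℤ) (i : ℤ) : Set ℤ :=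
  {v | ∃ (K : ℕ) (q : ℕ → ℤ), v = (K : ℤ) + 1 ∧ q K = i ∧
    (∀ l ≤ K, q l ∈ Icc (1 : ℤ) n) ∧ ∀ l, l < K → q l < q (l + 1) ∧ w (q l) < w (q (l + 1))}

def IsMBCNumbering (n : ℕ) (w f : ℤ → ℤ) : Prop :=
  ∀ i ∈ Icc (1 : ℤ) n, IsGreatest (mbcChainLengths n w i) (f i)

namespace IsMBCNumbering

variable {n : ℕ} {w f : ℤ → ℤ} {i j : ℤ}

theorem one_le (hf : IsMBCNumbering n w f) (hi : i ∈ Icc (1 : ℤ) n) : 1 ≤ f i := by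
  obtain ⟨K, -, hK, -⟩ := (hf i hi).1
  omega

theorem add_one_le (hf : IsMBCNumbering n w f) (hi : i ∈ Icc (1 : ℤ) n)
    (hj : j ∈ Icc (1 : ℤ) n) (hij : i < j) (hw : w i < w j) : f i + 1 ≤ f j := by
  obtain ⟨K, q, hK, hqK, hqmem, hq⟩ := (hf i hi).1
  refine (hf j hj).2 ⟨K + 1, fun l => if l ≤ K then q l else j, by push_cast; omega,
    by simp, fun l _ => ?_, fun l hl => ?_⟩
  · dsimp only
    split_ifs with hlK
    · exact hqmem l hlK
    · exact hj
  · rcases Nat.lt_or_ge l K with hlK | hlK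
    · simpa [hlK.le, Nat.succ_le_of_lt hlK] using hq l hlK
    · obtain rfl : l = K := by omega
      simpa [hqK] using And.intro hij hw

theorem exists_pred (hf : IsMBCNumbering n w f) (hj : j ∈ Icc (1 : ℤ) n) (h2 : 2 ≤ f j) :
    ∃ i ∈ Icc (1 : ℤ) n, i < j ∧ w i < w j ∧ f i + 1 = f j := by
  obtain ⟨K, q, hK, hqK, hqmem, hq⟩ := (hf j hj).1
  obtain ⟨K, rfl⟩ : ∃ K', K = K' + 1 := ⟨K - 1, by omega⟩
  have hqmem' : q K ∈ Icc (1 : ℤ) n := hqmem K (by omega)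
  have hstep := hq K (by omega)
  rw [hqK] at hstep
  have hge : (K : ℤ) + 1 ≤ f (q K) :=
    (hf _ hqmem').2 ⟨K, q, rfl, rfl, fun l hl => hqmem l (by omega), fun l hl => hq l (by omega)⟩
  have hle := hf.add_one_le hqmem' hj hstep.1 hstep.2
  exact ⟨q K, hqmem', hstep.1, hstep.2, by push_cast at hK; omega⟩

variable {m : ℕ}

theorem le_width (hinj : Injective w) (hfin : ∀ i ∈ Icc (1 : ℤ) n, w i ∈ Icc (1 : ℤ) n)
    (hm : IsShiWidth n w m) (hf : IsMBCNumbering n w f) (hi : i ∈ Icc (1 : ℤ) n) :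
    f i ≤ m := by
  obtain ⟨K, q, hK, -, hqmem, hq⟩ := (hf i hi).1
  have hqmono : StrictMonoOn q (Set.Iic K) :=
    strictMonoOn_Iic_of_lt_succ fun l hl => (hq l hl).1
  have hwqmono : StrictMonoOn (w ∘ q) (Set.Iic K) :=
    strictMonoOn_Iic_of_lt_succ fun l hl => (hq l hl).2
  have hchain : IsShiAntichain n w ((Iic K).image q) := by
    refine (isShiAntichain_iff hinj hfin).2 ⟨fun x hx => ?_, fun x hx y hy hxy => ?_⟩
    · obtain ⟨l, hl, rfl⟩ := mem_image.1 hx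
      exact hqmem l (mem_Iic.1 hl)
    · obtain ⟨a, ha, rfl⟩ := mem_image.1 hx
      obtain ⟨b, hb, rfl⟩ := mem_image.1 hy
      rw [← mem_coe, coe_Iic] at ha hb
      exact hwqmono ha hb ((hqmono.lt_iff_lt ha hb).1 hxy)
  have hcard := hm.2 _ hchain
  rw [card_image_of_injOn (by simpa using hqmono.injOn), Nat.card_Iic] at hcard
  omega

theorem exists_card_le (hf : IsMBCNumbering n w f) {A : Finset ℤ} (hA : A ⊆ Icc (1 : ℤ) n)
    (hchain : IsNWChain w A) (hne : A.Nonempty) : ∃ a ∈ A, (A.card : ℤ) ≤ f a := by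
  by_contra! hlt
  -- pigeonhole: `f` is injective on the chain `A` but would map it into `{1, …, #A - 1}`
  have hmaps : Set.MapsTo f A (Icc (1 : ℤ) (A.card - 1)) := fun a ha =>
    mem_Icc.2 ⟨hf.one_le (hA ha), by have := hlt a ha; omega⟩
  have hinjOn : Set.InjOn f A := by
    intro a ha b hb hab
    by_contra hab'
    rcases lt_or_gt_of_ne hab' with h | h
    · have := hf.add_one_le (hA ha) (hA hb) h (hchain a ha b hb h); omega
    · have := hf.add_one_le (hA hb) (hA ha) h (hchain b hb a ha h); omega
  have hle := card_le_card_of_injOn f hmaps hinjOn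
  rw [Int.card_Icc] at hle
  have := hne.card_pos
  omega

theorem exists_eq_width (hn : 0 < n) (hinj : Injective w)
    (hfin : ∀ i ∈ Icc (1 : ℤ) n, w i ∈ Icc (1 : ℤ) n) (hm : IsShiWidth n w m)
    (hf : IsMBCNumbering n w f) : ∃ i ∈ Icc (1 : ℤ) n, f i = m := by
  obtain ⟨A, hA, hcard⟩ := hm.1
  have hsingle : IsShiAntichain n w {1} :=
    (isShiAntichain_iff hinj hfin).2
      ⟨singleton_subset_iff.2 (mem_Icc.2 ⟨le_rfl, by exact_mod_cast hn⟩),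
        fun i hi j hj hij => by simp_all⟩
  have hne : A.Nonempty := card_pos.1 (hcard ▸ hm.2 _ hsingle)
  obtain ⟨hAsub, hAchain⟩ := (isShiAntichain_iff hinj hfin).1 hA
  obtain ⟨a, ha, hle⟩ := hf.exists_card_le hAsub hAchain hne
  exact ⟨a, hAsub ha, le_antisymm (hf.le_width hinj hfin hm (hAsub ha)) (hcard ▸ hle)⟩

end IsMBCNumbering

noncomputable def blockSup {n : ℕ} (hn : 0 < n) (d : ℤ → ℤ) (k : ℤ) : ℤ :=
  (Icc (1 : ℤ) n).sup' (nonempty_Icc.2 (by exact_mod_cast hn)) fun i => d (i + k * n)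

theorem le_blockSup {n : ℕ} {hn : 0 < n} {d : ℤ → ℤ} {i : ℤ} (hi : i ∈ Icc (1 : ℤ) n)
    (k : ℤ) : d (i + k * n) ≤ blockSup hn d k :=
  le_sup' (fun i => d (i + k * n)) hi

namespace IsProper

variable {n m : ℕ} {w d f : ℤ → ℤ}

theorem exists_pred (hinj : Injective w) (hd : IsProper w d) (j : ℤ) :
    ∃ i < j, w i < w j ∧ d i + 1 = d j := by
  obtain ⟨i, hij, hw, hdi⟩ := hd.2 j
  have hne : i ≠ j := by rintro rfl; omega
  exact ⟨i, lt_of_le_of_ne hij hne, lt_of_le_of_ne hw (hinj.ne hne), by omega⟩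

theorem strictMono_add_mul (hn : 0 < n) (hper : ∀ i : ℤ, w (i + n) = w i + n)
    (hd : IsProper w d) (i : ℤ) : StrictMono fun k : ℤ => d (i + k * n) := by
  have hpos : (0 : ℤ) < n := by exact_mod_cast hn
  refine strictMono_int_of_lt_succ fun k => hd.1 _ _ ?_ ?_
  · linarith
  · rw [add_one_mul, ← add_assoc, hper]
    linarith

theorem blockSup_add_le (hn : 0 < n) (hper : ∀ i : ℤ, w (i + n) = w i + n)
    (hfin : ∀ i ∈ Icc (1 : ℤ) n, w i ∈ Icc (1 : ℤ) n) (hf : IsMBCNumbering n w f)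
    (hd : IsProper w d) (k : ℤ) {j : ℤ} (hj : j ∈ Icc (1 : ℤ) n) :
    blockSup hn d k + f j ≤ d (j + (k + 1) * n) := by
  obtain ⟨K, q, hK, hqK, hqmem, hq⟩ := (hf j hj).1
  have hchain : ∀ l ≤ K, blockSup hn d k + (l + 1) ≤ d (q l + (k + 1) * n) := by
    intro l
    induction l with
    | zero =>
      intro _
      have : blockSup hn d k < d (q 0 + (k + 1) * n) := (sup'_lt_iff _).2 fun i hi =>
        let hnw := nw_of_lt_of_mem_Icc hper hfin hi (hqmem 0 (Nat.zero_le K)) (lt_add_one k)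
        hd.1 _ _ hnw.1 hnw.2
      push_cast
      omega
    | succ l ih =>
      intro hl
      have hprev := ih (by omega)
      obtain ⟨hql, hwql⟩ := hq l (by omega)
      have hstep := hd.1 (q l + (k + 1) * n) (q (l + 1) + (k + 1) * n) (by linarith)
        (by rw [map_add_mul_of_map_add hper, map_add_mul_of_map_add hper]; linarith)
      push_cast at hprev ⊢
      omega
  have := hchain K le_rfl
  rw [hqK] at this
  omega

theorem le_blockSup_add (hn : 0 < n) (hinj : Injective w)
    (hper : ∀ i : ℤ, w (i + n) = w i + n) (hf : IsMBCNumbering n w f) (hd : IsProper w d)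
    (k : ℤ) {j : ℤ} (hj : j ∈ Icc (1 : ℤ) n) :
    d (j + (k + 1) * n) ≤ blockSup hn d k + f j := by
  induction j using Int.strongRec (m := 1) with
  | lt j hj1 => exact absurd (mem_Icc.1 hj).1 (not_le.2 hj1)
  | ge j _ ih =>
    obtain ⟨i, hij, hw, hdi⟩ := hd.exists_pred hinj (j + (k + 1) * n)
    obtain ⟨i, hi, k', rfl⟩ := exists_mem_Icc_eq_add_mul hn i
    rcases (le_of_add_mul_le_add_mul hi hj hij.le).lt_or_eq with hk' | rfl
    · have h1 : d (i + k' * n) ≤ d (i + k * n) :=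
        (hd.strictMono_add_mul hn hper i).monotone (by omega)
      have h2 : d (i + k * n) ≤ blockSup hn d k := le_blockSup hi k
      have h3 := hf.one_le hj
      omega
    · have hij' : i < j := by linarith
      have hw' : w i < w j := by
        rw [map_add_mul_of_map_add hper, map_add_mul_of_map_add hper] at hw
        linarith
      have h1 := ih i hij' hi
      have h2 := hf.add_one_le hi hj hij' hw'
      omega

theorem eq_blockSup_add (hn : 0 < n) (hinj : Injective w)
    (hper : ∀ i : ℤ, w (i + n) = w i + n) (hfin : ∀ i ∈ Icc (1 : ℤ) n, w i ∈ Icc (1 : ℤ) n)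
    (hf : IsMBCNumbering n w f) (hd : IsProper w d) (k : ℤ) {j : ℤ}
    (hj : j ∈ Icc (1 : ℤ) n) : d (j + (k + 1) * n) = blockSup hn d k + f j :=
  le_antisymm (hd.le_blockSup_add hn hinj hper hf k hj)
    (hd.blockSup_add_le hn hper hfin hf k hj)

theorem blockSup_add_one (hn : 0 < n) (hinj : Injective w)
    (hper : ∀ i : ℤ, w (i + n) = w i + n) (hfin : ∀ i ∈ Icc (1 : ℤ) n, w i ∈ Icc (1 : ℤ) n)
    (hm : IsShiWidth n w m) (hf : IsMBCNumbering n w f) (hd : IsProper w d) (k : ℤ) :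
    blockSup hn d (k + 1) = blockSup hn d k + m := by
  obtain ⟨i, hi, hfi⟩ := hf.exists_eq_width hn hinj hfin hm
  refine le_antisymm (sup'_le _ _ fun j hj => ?_) ?_
  · rw [hd.eq_blockSup_add hn hinj hper hfin hf k hj]
    have := hf.le_width hinj hfin hm hj
    omega
  · calc blockSup hn d k + m = d (i + (k + 1) * n) := by
          rw [hd.eq_blockSup_add hn hinj hper hfin hf k hi, hfi]
      _ ≤ blockSup hn d (k + 1) := le_blockSup hi _

theorem eq_mbc_add_mul_add (hn : 0 < n) (hinj : Injective w)
    (hper : ∀ i : ℤ, w (i + n) = w i + n) (hfin : ∀ i ∈ Icc (1 : ℤ) n, w i ∈ Icc (1 : ℤ) n)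
    (hm : IsShiWidth n w m) (hf : IsMBCNumbering n w f) (hd : IsProper w d) :
    ∃ c : ℤ, ∀ i ∈ Icc (1 : ℤ) n, ∀ k : ℤ, d (i + k * n) = f i + k * m + c := by
  have hperiodic : Periodic (fun k => blockSup hn d k - k * m) 1 := fun k => by
    simp only [hd.blockSup_add_one hn hinj hper hfin hm hf k]
    ring
  refine ⟨blockSup hn d 0 - m, fun i hi k => ?_⟩
  have hsup := hperiodic.int_mul_eq (k - 1)
  simp only [Int.cast_id, mul_one, zero_mul, sub_zero] at hsup
  rw [← sub_add_cancel k 1, hd.eq_blockSup_add hn hinj hper hfin hf _ hi]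
  linarith

end IsProper

section Extension

variable {n m : ℕ} {w f : ℤ → ℤ}

noncomputable def mbcExtension (hn : 0 < n) (f : ℤ → ℤ) (m : ℕ) (j : ℤ) : ℤ :=
  f (toIcoMod (Int.natCast_pos.2 hn) 1 j) + toIcoDiv (Int.natCast_pos.2 hn) 1 j * m

theorem mbcExtension_add_mul (hn : 0 < n) {i : ℤ} (hi : i ∈ Icc (1 : ℤ) n) (k : ℤ) :
    mbcExtension hn f m (i + k * n) = f i + k * m := by
  have hi' : i ∈ Set.Ico (1 : ℤ) (1 + n) := by
    rw [mem_Icc] at hi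
    rw [Set.mem_Ico]
    omega
  have hmod : toIcoMod (Int.natCast_pos.2 hn) 1 (i + k * n) = i := by
    rw [← smul_eq_mul, toIcoMod_add_zsmul, toIcoMod_eq_self]
    exact hi'
  have hdiv : toIcoDiv (Int.natCast_pos.2 hn) 1 (i + k * n) = k := by
    rw [← smul_eq_mul, toIcoDiv_add_zsmul, toIcoDiv_eq_of_sub_zsmul_mem_Ico (n := 0) _ (by simpa using hi'),
      zero_add]
  rw [mbcExtension, hmod, hdiv]

theorem isProper_mbcExtension (hn : 0 < n) (hinj : Injective w)
    (hper : ∀ i : ℤ, w (i + n) = w i + n) (hfin : ∀ i ∈ Icc (1 : ℤ) n, w i ∈ Icc (1 : ℤ) n)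
    (hm : IsShiWidth n w m) (hf : IsMBCNumbering n w f) :
    IsProper w (mbcExtension hn f m) := by
  constructor
  · intro i j hij hw
    obtain ⟨i, hi, k, rfl⟩ := exists_mem_Icc_eq_add_mul hn i
    obtain ⟨j, hj, l, rfl⟩ := exists_mem_Icc_eq_add_mul hn j
    rw [mbcExtension_add_mul hn hi, mbcExtension_add_mul hn hj]
    rcases (le_of_add_mul_le_add_mul hi hj hij.le).lt_or_eq with hkl | rfl
    · have h1 := hf.le_width hinj hfin hm hi
      have h2 := hf.one_le hj
      have h3 : (k + 1) * (m : ℤ) ≤ l * m := mul_le_mul_of_nonneg_right (by omega) (by positivity)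
      linarith
    · rw [map_add_mul_of_map_add hper, map_add_mul_of_map_add hper] at hw
      have := hf.add_one_le hi hj (by linarith) (by linarith)
      linarith
  · intro j
    obtain ⟨j, hj, l, rfl⟩ := exists_mem_Icc_eq_add_mul hn j
    rcases lt_or_ge (f j) 2 with hlt | hge
    · obtain ⟨i, hi, hfi⟩ := hf.exists_eq_width hn hinj hfin hm
      have hnw := nw_of_lt_of_mem_Icc hper hfin hi hj (sub_one_lt l)
      have hfj : f j = 1 := le_antisymm (by omega) (hf.one_le hj)
      refine ⟨i + (l - 1) * n, hnw.1.le, hnw.2.le, ?_⟩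
      rw [mbcExtension_add_mul hn hi, mbcExtension_add_mul hn hj, hfi, hfj]
      ring
    · obtain ⟨i, hi, hij, hw, hfi⟩ := hf.exists_pred hj hge
      refine ⟨i + l * n, by linarith, ?_, ?_⟩
      · rw [map_add_mul_of_map_add hper, map_add_mul_of_map_add hper]
        linarith
      · rw [mbcExtension_add_mul hn hi, mbcExtension_add_mul hn hj]
        linarith

end Extension

theorem stmt18 (n : ℕ) (hn : 0 < n) (w : ℤ → ℤ)
    (hbij : Function.Bijective w) (hper : ∀ i : ℤ, w (i + n) = w i + n)
    -- `w` arises from a finite permutation of `{1,…,n}`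
    (hfin : ∀ i ∈ Finset.Icc (1 : ℤ) n, w i ∈ Finset.Icc (1 : ℤ) n)
    (m : ℕ) (hm : IsShiWidth n w m)
    -- the MBC numbering of the finite block: `dMBC i` is the greatest
    -- `K + 1` over strictly-northwest chains inside the block ending at `i`
    (dMBC : ℤ → ℤ)
    (hMBC : ∀ i ∈ Finset.Icc (1 : ℤ) n,
      IsGreatest {v : ℤ | ∃ (K : ℕ) (q : ℕ → ℤ), v = (K : ℤ) + 1 ∧ q K = i ∧
        (∀ l ≤ K, q l ∈ Finset.Icc (1 : ℤ) n) ∧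
        ∀ l, l < K → q l < q (l + 1) ∧ w (q l) < w (q (l + 1))} (dMBC i)) :
    -- uniqueness of the proper numbering up to an overall additive shift
    (∀ d d' : ℤ → ℤ, IsProper w d → IsProper w d' → ∃ c : ℤ, ∀ i : ℤ, d' i = d i + c) ∧
    -- the semi-periodic extension of the MBC numbering is a proper numbering
    ∃ d : ℤ → ℤ, IsProper w d ∧
      ∀ i ∈ Finset.Icc (1 : ℤ) n, ∀ k : ℤ, d (i + k * n) = dMBC i + k * m := by
  have hinj := hbij.injective
  have hf : IsMBCNumbering n w dMBC := hMBC
  refine ⟨fun d d' hd hd' => ?_, mbcExtension hn dMBC m,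
    isProper_mbcExtension hn hinj hper hfin hm hf, fun i hi k => mbcExtension_add_mul hn hi k⟩
  obtain ⟨c, hc⟩ := hd.eq_mbc_add_mul_add hn hinj hper hfin hm hf
  obtain ⟨c', hc'⟩ := hd'.eq_mbc_add_mul_add hn hinj hper hfin hm hf
  refine ⟨c' - c, fun j => ?_⟩
  obtain ⟨i, hi, k, rfl⟩ := exists_mem_Icc_eq_add_mul hn j
  rw [hc i hi k, hc' i hi k]
  ring
end
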